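/- arXiv:0906.1754 — 12 statements merged into one kernel-verified Lean document; each statement's English description precedes it below -/
import Mathlib

section
/- Suppose γ₁ and γ₂ both solve the ODE γ'(x) = (γ(x) + γ(x)² − P(x))/(x·γ(x)) on (0,x*], both are negative there, both tend to 0 as x → 0⁺, and both satisfy γᵢ(x) ≥ γ_c⁺(x) := (√(1+4P(x)) − 1)/2 for all x ∈ (0,x*], where P satisfies P(0)=0, P'(0)<0, P concave on [0,x*], and P(x) > −1/4 on [0,x*]. Then γ₁(x*) = γ₂(x*) implies γ₁ = γ₂; moreover if γ₁(x*) ≠ γ₂(x*) then |γ₁(x)−γ₂(x)| ≥ |γ₁(x*)−γ₂(x*)|·(x/x*)·exp(∫ₓ^{x*} |P'(0)|/γ_c⁺(z)² dz), which diverges as x → 0⁺, a contradiction; hence there is at most one solution of the ODE on (0,x*] with limit 0 at x=0. -/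
open Set Filter

/-!
Above the nullcline and below zero, two solutions satisfy `γ₁ γ₂ + P ≤ 0`, and their difference
`d = γ₁ - γ₂` obeys the linear equation `d' = d · (γ₁ γ₂ + P) / (x γ₁ γ₂)` with a nonpositive
coefficient. Hence `d²` is nonincreasing on `(0, x*]`; since it tends to `0` at `0⁺`, it vanishes.
-/

/-- The nullcline `γ_c⁺`: the larger root of `γ² + γ = p` (and `-1/2` when `p < -1/4`). -/
noncomputable def upperNullcline (p : ℝ) : ℝ := (Real.sqrt (1 + 4 * p) - 1) / 2

theorem upperNullcline_sq_add_nonpos {p : ℝ} (hp : upperNullcline p ≤ 0) :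
    upperNullcline p ^ 2 + p ≤ 0 := by
  unfold upperNullcline at *
  set s := Real.sqrt (1 + 4 * p)
  rcases le_or_gt 0 (1 + 4 * p) with hp4 | hp4
  · -- `c² + p = c · s` for `c = (s - 1) / 2`, and `c ≤ 0 ≤ s`
    have hs2 : s ^ 2 = 1 + 4 * p := Real.sq_sqrt hp4
    nlinarith [Real.sqrt_nonneg (1 + 4 * p)]
  · have hs : s = 0 := Real.sqrt_eq_zero_of_nonpos hp4.le
    rw [hs]
    linarith

theorem mul_add_nonpos_of_upperNullcline_le {a b p : ℝ}
    (ha : upperNullcline p ≤ a) (ha0 : a ≤ 0) (hb : upperNullcline p ≤ b) (hb0 : b ≤ 0) :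
    a * b + p ≤ 0 := by
  have hab : a * b ≤ upperNullcline p ^ 2 := by
    nlinarith [mul_le_mul (neg_le_neg ha) (neg_le_neg hb) (neg_nonneg.2 hb0) (by linarith)]
  linarith [upperNullcline_sq_add_nonpos (ha.trans ha0)]

theorem dysonSchwinger_field_sub {x a b p : ℝ} (hx : x ≠ 0) (ha : a ≠ 0) (hb : b ≠ 0) :
    (a + a ^ 2 - p) / (x * a) - (b + b ^ 2 - p) / (x * b) =
      (a - b) * ((a * b + p) / (x * (a * b))) := by
  field_simp
  ring

theorem antitoneOn_sq_of_hasDerivAt_mul_nonpos {d k : ℝ → ℝ} {s : Set ℝ} (hs : Convex ℝ s)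
    (hd : ∀ x ∈ s, HasDerivAt d (d x * k x) x) (hk : ∀ x ∈ s, k x ≤ 0) :
    AntitoneOn (fun x => d x ^ 2) s := by
  have hsq : ∀ x ∈ s, HasDerivAt (fun x => d x ^ 2) (2 * d x ^ 2 * k x) x := fun x hx =>
    ((hd x hx).pow 2).congr_deriv (by push_cast; ring)
  refine antitoneOn_of_hasDerivWithinAt_nonpos hs
    (fun x hx => (hsq x hx).continuousAt.continuousWithinAt)
    (fun x hx => (hsq x (interior_subset hx)).hasDerivWithinAt) fun x hx => ?_
  exact mul_nonpos_of_nonneg_of_nonpos (by positivity) (hk x (interior_subset hx))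

theorem AntitoneOn.le_of_tendsto_nhdsGT {f : ℝ → ℝ} {a b L y : ℝ} (hf : AntitoneOn f (Ioc a b))
    (hlim : Tendsto f (nhdsWithin a (Ioi a)) (nhds L)) (hy : y ∈ Ioc a b) : f y ≤ L := by
  refine ge_of_tendsto hlim ?_
  filter_upwards [Ioo_mem_nhdsGT hy.1] with x hx
  exact hf ⟨hx.1, hx.2.le.trans hy.2⟩ hy hx.2.le

theorem qcd_asymptotically_free_unique_general
    (P : ℝ → ℝ) (xstar : ℝ)
    (γ₁ γ₂ : ℝ → ℝ)
    (hode₁ : ∀ x ∈ Ioc (0 : ℝ) xstar,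
      HasDerivAt γ₁ ((γ₁ x + γ₁ x ^ 2 - P x) / (x * γ₁ x)) x)
    (hode₂ : ∀ x ∈ Ioc (0 : ℝ) xstar,
      HasDerivAt γ₂ ((γ₂ x + γ₂ x ^ 2 - P x) / (x * γ₂ x)) x)
    (hneg₁ : ∀ x ∈ Ioc (0 : ℝ) xstar, γ₁ x < 0)
    (hneg₂ : ∀ x ∈ Ioc (0 : ℝ) xstar, γ₂ x < 0)
    (hlim₁ : Tendsto γ₁ (nhdsWithin 0 (Ioi 0)) (nhds 0))
    (hlim₂ : Tendsto γ₂ (nhdsWithin 0 (Ioi 0)) (nhds 0))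
    (habove₁ : ∀ x ∈ Ioc (0 : ℝ) xstar, (Real.sqrt (1 + 4 * P x) - 1) / 2 ≤ γ₁ x)
    (habove₂ : ∀ x ∈ Ioc (0 : ℝ) xstar, (Real.sqrt (1 + 4 * P x) - 1) / 2 ≤ γ₂ x) :
    EqOn γ₁ γ₂ (Ioc (0 : ℝ) xstar) := by
  set k : ℝ → ℝ := fun x => (γ₁ x * γ₂ x + P x) / (x * (γ₁ x * γ₂ x))
  have hdiff : ∀ x ∈ Ioc (0 : ℝ) xstar,
      HasDerivAt (fun x => γ₁ x - γ₂ x) ((γ₁ x - γ₂ x) * k x) x := fun x hx =>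
    ((hode₁ x hx).sub (hode₂ x hx)).congr_deriv
      (dysonSchwinger_field_sub hx.1.ne' (hneg₁ x hx).ne (hneg₂ x hx).ne)
  have hk : ∀ x ∈ Ioc (0 : ℝ) xstar, k x ≤ 0 := fun x hx =>
    div_nonpos_of_nonpos_of_nonneg
      (mul_add_nonpos_of_upperNullcline_le (habove₁ x hx) (hneg₁ x hx).le
        (habove₂ x hx) (hneg₂ x hx).le)
      (mul_pos hx.1 (mul_pos_of_neg_of_neg (hneg₁ x hx) (hneg₂ x hx))).le
  have hanti := antitoneOn_sq_of_hasDerivAt_mul_nonpos (convex_Ioc 0 xstar) hdiff hk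
  have hlim : Tendsto (fun x => (γ₁ x - γ₂ x) ^ 2) (nhdsWithin 0 (Ioi 0)) (nhds 0) := by
    simpa using (hlim₁.sub hlim₂).pow 2
  intro y hy
  have hsq : (γ₁ y - γ₂ y) ^ 2 = 0 :=
    le_antisymm (hanti.le_of_tendsto_nhdsGT hlim hy) (sq_nonneg _)
  exact sub_eq_zero.1 (pow_eq_zero_iff two_ne_zero |>.1 hsq)

/-- uniqueness of the asymptotically free solution. If `γ₁` and `γ₂`
both solve the Dyson–Schwinger ODE on `(0,x*]`, are negative there, tend to `0`
as `x → 0⁺`, and lie above the nullcline `γ_c⁺(x) = (√(1+4P x) − 1)/2`, then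
they coincide on `(0,x*]`: there is at most one such solution. -/
theorem qcd_asymptotically_free_unique
    (P : ℝ → ℝ) (xstar : ℝ) (hxstar : 0 < xstar)
    (hP0 : P 0 = 0)
    (hP'0 : deriv P 0 < 0)
    (hconc : ∀ x ∈ Icc (0 : ℝ) xstar, deriv (deriv P) x ≤ 0)
    (hPgt : ∀ x ∈ Icc (0 : ℝ) xstar, -(1 / 4 : ℝ) < P x)
    (γ₁ γ₂ : ℝ → ℝ)
    (hode₁ : ∀ x ∈ Ioc (0 : ℝ) xstar,
      HasDerivAt γ₁ ((γ₁ x + γ₁ x ^ 2 - P x) / (x * γ₁ x)) x)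
    (hode₂ : ∀ x ∈ Ioc (0 : ℝ) xstar,
      HasDerivAt γ₂ ((γ₂ x + γ₂ x ^ 2 - P x) / (x * γ₂ x)) x)
    (hneg₁ : ∀ x ∈ Ioc (0 : ℝ) xstar, γ₁ x < 0)
    (hneg₂ : ∀ x ∈ Ioc (0 : ℝ) xstar, γ₂ x < 0)
    (hlim₁ : Tendsto γ₁ (nhdsWithin 0 (Ioi 0)) (nhds 0))
    (hlim₂ : Tendsto γ₂ (nhdsWithin 0 (Ioi 0)) (nhds 0))
    (habove₁ : ∀ x ∈ Ioc (0 : ℝ) xstar, (Real.sqrt (1 + 4 * P x) - 1) / 2 ≤ γ₁ x)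
    (habove₂ : ∀ x ∈ Ioc (0 : ℝ) xstar, (Real.sqrt (1 + 4 * P x) - 1) / 2 ≤ γ₂ x) :
    EqOn γ₁ γ₂ (Ioc (0 : ℝ) xstar) :=
  qcd_asymptotically_free_unique_general P xstar γ₁ γ₂ hode₁ hode₂ hneg₁ hneg₂ hlim₁ hlim₂ habove₁
    habove₂
end

section
/- Let γ₁ solve γ'(x) = (γ(x)+γ(x)²−P(x))/(x γ(x)) on an interval with γ₁(x*) = γ₀ and let γ₂ be any C¹ function on the same interval with γ₂ nonvanishing. Define R[γ₂](x) = γ₂'(x) − (γ₂(x)+γ₂(x)²−P(x))/(x γ₂(x)) and K(y,x) = (x/y)·exp(−∫ₓ^y P(z)/(z γ₁(z) γ₂(z)) dz). Then for all x, x₀ in the interval: γ₁(x) − γ₂(x) = (γ₁(x₀) − γ₂(x₀))·K(x₀,x) + ∫ₓ^{x₀} R[γ₂](y)·K(y,x) dy. -/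
/-! The difference `δ = γ₁ - γ₂` solves a linear equation: the right-hand sides of the
Riccati-type equation at `γ₁` and at `γ₂` differ by `(1/x + P/(x γ₁ γ₂)) δ`, and the defect of `γ₂`
is `R[γ₂]`, so `δ' = (1/x + P/(x γ₁ γ₂)) δ - R[γ₂]`. Variation of constants solves it; the `1/x`
part of the integrating factor integrates to a logarithm and produces the factor `x/y` of `K`. -/

open Set intervalIntegral Real MeasureTheory

theorem ContinuousOn.hasDerivWithinAt_integral_Icc {f : ℝ → ℝ} {a b x t : ℝ}
    (hf : ContinuousOn f (Icc a b)) (hx : x ∈ Icc a b) (ht : t ∈ Icc a b) :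
    HasDerivWithinAt (fun y => ∫ z in x..y, f z) (f t) (Icc a b) t :=
  have : Fact (t ∈ Icc a b) := ⟨ht⟩
  integral_hasDerivWithinAt_right ((hf.mono (uIcc_subset_Icc hx ht)).intervalIntegrable)
    (hf.stronglyMeasurableAtFilter_nhdsWithin measurableSet_Icc t) (hf t ht)

theorem ContDiffOn.continuousOn_derivWithin_Icc {f : ℝ → ℝ} {a b : ℝ}
    (hf : ContDiffOn ℝ 1 f (Icc a b)) : ContinuousOn (derivWithin f (Icc a b)) (Icc a b) := by
  rcases lt_or_ge a b with hab | hba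
  · exact hf.continuousOn_derivWithin (uniqueDiffOn_Icc hab) le_rfl
  · exact (subsingleton_Icc_of_ge hba).continuousOn _

theorem eq_mul_exp_integral_add_integral_of_hasDerivWithinAt {a b x x₀ : ℝ} {α r δ : ℝ → ℝ}
    (hα : ContinuousOn α (Icc a b)) (hr : ContinuousOn r (Icc a b))
    (hδ : ∀ t ∈ Icc a b, HasDerivWithinAt δ (α t * δ t - r t) (Icc a b) t)
    (hx : x ∈ Icc a b) (hx₀ : x₀ ∈ Icc a b) :
    δ x = δ x₀ * exp (-∫ z in x..x₀, α z) + ∫ y in x..x₀, r y * exp (-∫ z in x..y, α z) := by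
  set μ : ℝ → ℝ := fun y => exp (-∫ z in x..y, α z)
  have hμ : ∀ t ∈ Icc a b, HasDerivWithinAt μ (μ t * -α t) (Icc a b) t := fun t ht =>
    (hα.hasDerivWithinAt_integral_Icc hx ht).neg.exp
  have hμc : ContinuousOn μ (Icc a b) := fun t ht => (hμ t ht).continuousWithinAt
  -- integrating factor: `(δ μ)' = -r μ`
  set g : ℝ → ℝ := fun t => δ t * μ t + ∫ y in x..t, r y * μ y
  have hg : ∀ t ∈ Icc a b, HasDerivWithinAt g 0 (Icc a b) t := by
    intro t ht
    refine (((hδ t ht).mul (hμ t ht)).add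
      ((hr.mul hμc).hasDerivWithinAt_integral_Icc hx ht)).congr_deriv ?_
    simp only [Pi.mul_apply]
    ring
  have hconst : g x₀ = g x := by
    simpa [sub_eq_zero] using
      Convex.norm_image_sub_le_of_norm_hasDerivWithin_le hg (fun _ _ => norm_zero.le)
        (convex_Icc a b) hx hx₀
  simpa [g, μ] using hconst.symm

theorem exp_neg_integral_inv_add {q : ℝ → ℝ} {x y : ℝ} (hx : 0 < x) (hy : 0 < y)
    (hq : IntervalIntegrable q volume x y) :
    exp (-∫ z in x..y, (z⁻¹ + q z)) = x / y * exp (-∫ z in x..y, q z) := by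
  have h0 : (0 : ℝ) ∉ uIcc x y := fun h => (lt_min hx hy).not_ge h.1
  rw [integral_add (intervalIntegrable_inv_iff.2 (Or.inr h0)) hq, integral_inv h0, neg_add,
    exp_add, exp_neg, exp_log (div_pos hy hx), inv_div]

theorem riccati_rhs_sub_riccati_rhs {t u v p : ℝ} (ht : t ≠ 0) (hu : u ≠ 0) (hv : v ≠ 0) :
    (u + u ^ 2 - p) / (t * u) - (v + v ^ 2 - p) / (t * v) =
      (t⁻¹ + p / (t * u * v)) * (u - v) := by
  field_simp
  ring

theorem qcd_variation_of_constants_general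
    (P : ℝ → ℝ) (hPcont : Continuous P)
    (a b : ℝ) (ha : 0 < a)
    (γ₁ γ₂ : ℝ → ℝ)
    (hode₁ : ∀ x ∈ Icc a b,
      HasDerivAt γ₁ ((γ₁ x + γ₁ x ^ 2 - P x) / (x * γ₁ x)) x)
    (hγ₁ne : ∀ x ∈ Icc a b, γ₁ x ≠ 0)
    (hγ₂C1 : ContDiffOn ℝ 1 γ₂ (Icc a b))
    (hγ₂ne : ∀ x ∈ Icc a b, γ₂ x ≠ 0) :
    ∀ x ∈ Icc a b, ∀ x₀ ∈ Icc a b,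
      γ₁ x - γ₂ x =
        (γ₁ x₀ - γ₂ x₀) *
          ((x / x₀) * Real.exp (-(∫ z in x..x₀, P z / (z * γ₁ z * γ₂ z)))) +
        ∫ y in x..x₀,
          (deriv γ₂ y - (γ₂ y + γ₂ y ^ 2 - P y) / (y * γ₂ y)) *
            ((x / y) * Real.exp (-(∫ z in x..y, P z / (z * γ₁ z * γ₂ z)))) := by
  intro x hx x₀ hx₀
  have hpos : ∀ t ∈ Icc a b, 0 < t := fun t ht => ha.trans_le ht.1
  have hγ₁ : ContinuousOn γ₁ (Icc a b) := fun t ht =>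
    (hode₁ t ht).continuousAt.continuousWithinAt
  have hγ₂ : ContinuousOn γ₂ (Icc a b) := hγ₂C1.continuousOn
  set q : ℝ → ℝ := fun z => P z / (z * γ₁ z * γ₂ z)
  have hq : ContinuousOn q (Icc a b) :=
    hPcont.continuousOn.div ((continuousOn_id.mul hγ₁).mul hγ₂) fun t ht =>
      mul_ne_zero (mul_ne_zero (hpos t ht).ne' (hγ₁ne t ht)) (hγ₂ne t ht)
  have hα : ContinuousOn (fun z => z⁻¹ + q z) (Icc a b) :=
    (continuousOn_inv₀.mono fun t ht => (hpos t ht).ne').add hq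
  -- `derivWithin` replaces `deriv γ₂`, which may be junk at the endpoints
  set r : ℝ → ℝ := fun y => derivWithin γ₂ (Icc a b) y - (γ₂ y + γ₂ y ^ 2 - P y) / (y * γ₂ y)
  have hr : ContinuousOn r (Icc a b) :=
    hγ₂C1.continuousOn_derivWithin_Icc.sub (((hγ₂.add (hγ₂.pow 2)).sub hPcont.continuousOn).div
      (continuousOn_id.mul hγ₂) fun t ht => mul_ne_zero (hpos t ht).ne' (hγ₂ne t ht))
  have hδ : ∀ t ∈ Icc a b, HasDerivWithinAt (fun t => γ₁ t - γ₂ t)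
      ((t⁻¹ + q t) * (γ₁ t - γ₂ t) - r t) (Icc a b) t := by
    intro t ht
    refine ((hode₁ t ht).hasDerivWithinAt.sub
      (hγ₂C1.differentiableOn one_ne_zero t ht).hasDerivWithinAt).congr_deriv ?_
    linear_combination
      riccati_rhs_sub_riccati_rhs (p := P t) (hpos t ht).ne' (hγ₁ne t ht) (hγ₂ne t ht)
  have hkernel : ∀ y ∈ Icc a b,
      exp (-∫ z in x..y, (z⁻¹ + q z)) = x / y * exp (-∫ z in x..y, q z) := fun y hy =>
    exp_neg_integral_inv_add (hpos x hx) (hpos y hy)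
      (hq.mono (uIcc_subset_Icc hx hy)).intervalIntegrable
  rw [eq_mul_exp_integral_add_integral_of_hasDerivWithinAt hα hr hδ hx hx₀, hkernel x₀ hx₀]
  congr 1
  refine integral_congr_uIoo fun y hy => ?_
  have hy' : y ∈ Ioo a b := uIoo_subset_Ioo hx hx₀ hy
  simp only [r, hkernel y (Ioo_subset_Icc_self hy'),
    derivWithin_of_mem_nhds (Icc_mem_nhds hy'.1 hy'.2)]

/-- variation-of-constants identity. If `γ₁` solves the ODE on an
interval `[a,b] ⊂ (0,∞)` and `γ₂` is any nonvanishing `C¹` function there, then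
with `R[γ₂](x) = γ₂'(x) − (γ₂+γ₂²−P)/(xγ₂)` and
`K(y,x) = (x/y)·exp(−∫ₓ^y P(z)/(z γ₁ z γ₂ z) dz)`, for all `x, x₀ ∈ [a,b]`:
`γ₁ x − γ₂ x = (γ₁ x₀ − γ₂ x₀)·K(x₀,x) + ∫ₓ^{x₀} R[γ₂](y)·K(y,x) dy`. -/
theorem qcd_variation_of_constants
    (P : ℝ → ℝ) (hPcont : Continuous P)
    (a b : ℝ) (ha : 0 < a) (hab : a ≤ b)
    (γ₁ γ₂ : ℝ → ℝ)
    (hode₁ : ∀ x ∈ Icc a b,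
      HasDerivAt γ₁ ((γ₁ x + γ₁ x ^ 2 - P x) / (x * γ₁ x)) x)
    (hγ₁ne : ∀ x ∈ Icc a b, γ₁ x ≠ 0)
    (hγ₂C1 : ContDiffOn ℝ 1 γ₂ (Icc a b))
    (hγ₂ne : ∀ x ∈ Icc a b, γ₂ x ≠ 0) :
    ∀ x ∈ Icc a b, ∀ x₀ ∈ Icc a b,
      γ₁ x - γ₂ x =
        (γ₁ x₀ - γ₂ x₀) *
          ((x / x₀) * Real.exp (-(∫ z in x..x₀, P z / (z * γ₁ z * γ₂ z)))) +
        ∫ y in x..x₀,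
          (deriv γ₂ y - (γ₂ y + γ₂ y ^ 2 - P y) / (y * γ₂ y)) *
            ((x / y) * Real.exp (-(∫ z in x..y, P z / (z * γ₁ z * γ₂ z)))) :=
  qcd_variation_of_constants_general P hPcont a b ha γ₁ γ₂ hode₁ hγ₁ne hγ₂C1 hγ₂ne
end

section
/- Under H1 and H2, the unique asymptotically free solution γ₁* of γ' = (γ+γ²−P)/(xγ) on (0,x*] with lim_{x→0⁺} γ₁*(x) = 0 satisfies the two-sided bound (√(1+4P(x)) − 1)/2 ≤ γ₁*(x) ≤ P'(0)·x for all x ∈ (0,x*]; consequently γ₁*(x) = P'(0)x + O(x²) as x → 0. -/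
/-!
The bounds on `γ` are barrier arguments: a function `h` on `(0, x₀]` with `h → 0` at `0⁺` whose
derivative is negative wherever `h` is positive cannot become positive. It applies first to
`-γ - 1/2`, since at `γ = -1/2` the field equals `2 (P + 1/4) / x > 0`; the resulting `γ ≥ -1/2`
fixes the sign of the field in the other two cases. It then applies to `γ - P'(0) x`, because
concavity gives `P ≤ P'(0) x`, and to `r(P) - γ`, where `r(P) = (√(1 + 4P) - 1) / 2` is the
nullcline `γ + γ² = P` across which `γ'` changes sign. For the `O(x²)` estimate,
`P'(0) x - r(P) = (P'(0) x - P) + r(P)²`; concavity gives `P'(x) x ≤ P(x) ≤ P'(0) x`, and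
`P'(0) - P'(x) = O(x)` because `P'` is differentiable at `0`.
-/

open Set Filter Topology

theorem le_of_frequently_le_of_deriv_neg_of_eq {h h' : ℝ → ℝ} {a x₀ m : ℝ} (hax₀ : a < x₀)
    (hd : ∀ x ∈ Ioc a x₀, HasDerivAt h (h' x) x) (hfreq : ∃ᶠ x in 𝓝[>] a, h x ≤ m)
    (hsign : ∀ x ∈ Ioc a x₀, h x = m → h' x < 0) : h x₀ ≤ m := by
  obtain ⟨y, hym, hy⟩ := (hfreq.and_eventually (Ioo_mem_nhdsGT hax₀)).exists
  have hd' : ∀ x ∈ Icc y x₀, HasDerivAt h (h' x) x := fun x hx =>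
    hd x ⟨hy.1.trans_le hx.1, hx.2⟩
  refine image_le_of_deriv_right_lt_deriv_boundary (B := fun _ => m) (B' := 0)
    (fun x hx => (hd' x hx).continuousAt.continuousWithinAt)
    (fun x hx => (hd' x (Ico_subset_Icc_self hx)).hasDerivWithinAt) hym
    (fun _ => hasDerivAt_const _ _)
    (fun x hx => hsign x ⟨hy.1.trans_le hx.1, hx.2.le⟩) ⟨hy.2.le, le_rfl⟩

theorem nonpos_of_tendsto_zero_of_deriv_neg_of_pos {h h' : ℝ → ℝ} {a x₀ : ℝ} (hax₀ : a < x₀)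
    (hd : ∀ x ∈ Ioc a x₀, HasDerivAt h (h' x) x) (hlim : Tendsto h (𝓝[>] a) (𝓝 0))
    (hsign : ∀ x ∈ Ioc a x₀, 0 < h x → h' x < 0) : h x₀ ≤ 0 :=
  le_of_forall_pos_le_add fun ε hε => by
    rw [zero_add]
    exact le_of_frequently_le_of_deriv_neg_of_eq hax₀ hd
      (hlim.eventually (eventually_le_nhds hε)).frequently
      (fun x hx hxε => hsign x hx (hxε ▸ hε))

section AntitoneDeriv

variable {f : ℝ → ℝ} {a b : ℝ}

theorem AntitoneOn.exists_sub_le_mul_of_hasDerivAt {f' : ℝ}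
    (hanti : AntitoneOn f (Icc a b)) (hf : HasDerivAt f f' a) :
    ∃ M, ∀ x ∈ Icc a b, f a - f x ≤ M * (x - a) := by
  obtain ⟨K, hK⟩ := hf.isBigO_sub.bound
  obtain ⟨δ, hδ, hball⟩ := Metric.eventually_nhds_iff_ball.1 hK
  refine ⟨max K ((f a - f b) / δ), fun x hx => ?_⟩
  have hax : 0 ≤ x - a := sub_nonneg.2 hx.1
  rcases lt_or_ge (x - a) δ with hxδ | hxδ
  · have hx' := hball x (by rwa [Metric.mem_ball, Real.dist_eq, abs_of_nonneg hax])
    rw [Real.norm_eq_abs, Real.norm_eq_abs, abs_of_nonneg hax] at hx'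
    calc f a - f x ≤ K * (x - a) := by linarith [neg_abs_le (f x - f a)]
      _ ≤ _ := mul_le_mul_of_nonneg_right (le_max_left _ _) hax
  · have hab : a ≤ b := hx.1.trans hx.2
    have hfb : f b ≤ f x := hanti hx ⟨hab, le_rfl⟩ hx.2
    have hslope : 0 ≤ (f a - f b) / δ :=
      div_nonneg (sub_nonneg.2 (hanti ⟨le_rfl, hab⟩ ⟨hab, le_rfl⟩ hab)) hδ.le
    calc f a - f x ≤ (f a - f b) / δ * δ := by rw [div_mul_cancel₀ _ hδ.ne']; linarith
      _ ≤ (f a - f b) / δ * (x - a) := mul_le_mul_of_nonneg_left hxδ hslope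
      _ ≤ _ := mul_le_mul_of_nonneg_right (le_max_right _ _) hax

theorem AntitoneOn.sub_le_deriv_mul (hf : DifferentiableOn ℝ f (Icc a b))
    (hanti : AntitoneOn (deriv f) (Icc a b)) (hab : a ≤ b) :
    f b - f a ≤ deriv f a * (b - a) :=
  (convex_Icc a b).image_sub_le_mul_sub_of_deriv_le hf.continuousOn
    (hf.mono interior_subset)
    (fun _ hx => hanti ⟨le_rfl, hab⟩ (interior_subset hx) (interior_subset hx).1)
    a ⟨le_rfl, hab⟩ b ⟨hab, le_rfl⟩ hab

theorem AntitoneOn.deriv_mul_le_sub (hf : DifferentiableOn ℝ f (Icc a b))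
    (hanti : AntitoneOn (deriv f) (Icc a b)) (hab : a ≤ b) :
    deriv f b * (b - a) ≤ f b - f a :=
  (convex_Icc a b).mul_sub_le_image_sub_of_le_deriv hf.continuousOn
    (hf.mono interior_subset)
    (fun _ hx => hanti (interior_subset hx) ⟨hab, le_rfl⟩ (interior_subset hx).2)
    a ⟨le_rfl, hab⟩ b ⟨hab, le_rfl⟩ hab

theorem AntitoneOn.exists_taylor_sub_le_mul_sq (hf : Differentiable ℝ f)
    (hf' : DifferentiableAt ℝ (deriv f) a) (hanti : AntitoneOn (deriv f) (Icc a b)) :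
    ∃ M, ∀ x ∈ Icc a b, f a + deriv f a * (x - a) - f x ≤ M * (x - a) ^ 2 := by
  obtain ⟨M, hM⟩ := hanti.exists_sub_le_mul_of_hasDerivAt hf'.hasDerivAt
  refine ⟨M, fun x hx => ?_⟩
  have hsandwich := (hanti.mono (Icc_subset_Icc_right hx.2)).deriv_mul_le_sub
    hf.differentiableOn hx.1
  have hx' := sub_nonneg.2 hx.1
  nlinarith [mul_le_mul_of_nonneg_right (hM x hx) hx']

theorem AntitoneOn.abs_sub_le_mul (hf : Differentiable ℝ f)
    (hanti : AntitoneOn (deriv f) (Icc a b)) :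
    ∀ x ∈ Icc a b, |f x - f a| ≤ (|deriv f a| + |deriv f b|) * (x - a) := by
  intro x hx
  have hanti' := hanti.mono (Icc_subset_Icc_right hx.2)
  have hupper := hanti'.sub_le_deriv_mul hf.differentiableOn hx.1
  have hlower := hanti'.deriv_mul_le_sub hf.differentiableOn hx.1
  have hb : deriv f b ≤ deriv f x := hanti hx ⟨hx.1.trans hx.2, le_rfl⟩ hx.2
  have hx' := sub_nonneg.2 hx.1
  rw [abs_le]
  constructor
  · nlinarith [neg_abs_le (deriv f b), abs_nonneg (deriv f a)]
  · nlinarith [le_abs_self (deriv f a), abs_nonneg (deriv f b)]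

end AntitoneDeriv

/-- The root `t > -1/2` of `t + t ^ 2 = u`, so that `odeField P x` vanishes at
`nullclineRoot (P x)`. -/
noncomputable def nullclineRoot (u : ℝ) : ℝ := (√(1 + 4 * u) - 1) / 2

noncomputable def odeField (P : ℝ → ℝ) (x g : ℝ) : ℝ := (g + g ^ 2 - P x) / (x * g)

section NullclineRoot

variable {u : ℝ}

theorem nullclineRoot_zero : nullclineRoot 0 = 0 := by simp [nullclineRoot]

theorem continuous_nullclineRoot : Continuous nullclineRoot := by
  unfold nullclineRoot; fun_prop

theorem nullclineRoot_add_sq (hu : -(1 / 4) ≤ u) : nullclineRoot u + nullclineRoot u ^ 2 = u := by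
  have hs := Real.sq_sqrt (by linarith : 0 ≤ 1 + 4 * u)
  unfold nullclineRoot
  linear_combination hs / 4

theorem neg_half_lt_nullclineRoot (hu : -(1 / 4) < u) : -(1 / 2) < nullclineRoot u := by
  have := Real.sqrt_pos.2 (by linarith : 0 < 1 + 4 * u)
  unfold nullclineRoot
  linarith

theorem nullclineRoot_sq_le (hu : -(1 / 4) < u) : nullclineRoot u ^ 2 ≤ 4 * u ^ 2 := by
  have hsum := nullclineRoot_add_sq hu.le
  have hr := neg_half_lt_nullclineRoot hu
  -- `u = r (1 + r)` with `1 + r ≥ 1 / 2`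
  nlinarith [sq_nonneg (nullclineRoot u), sq_nonneg (nullclineRoot u * (1 + 2 * nullclineRoot u))]

theorem HasDerivAt.nullclineRoot {f : ℝ → ℝ} {f' x : ℝ} (hf : HasDerivAt f f' x)
    (hx : -(1 / 4) < f x) :
    HasDerivAt (fun y => _root_.nullclineRoot (f y)) (f' / √(1 + 4 * f x)) x := by
  have hpos : 0 < 1 + 4 * f x := by linarith
  have h := ((((hf.const_mul 4).const_add 1).sqrt hpos.ne').sub_const 1).div_const 2
  exact h.congr_deriv (by ring)

end NullclineRoot

section OdeField

variable {P : ℝ → ℝ} {x g c : ℝ}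

theorem odeField_neg_half_pos (hx : 0 < x) (hP : -(1 / 4) < P x) :
    0 < odeField P x (-(1 / 2)) :=
  div_pos_of_neg_of_neg (by linarith) (by linarith)

theorem odeField_lt_of_mul_lt (hx : 0 < x) (hg : g < 0) (hg' : -(1 / 2) ≤ g)
    (hP : P x ≤ c * x) (hcg : c * x < g) : odeField P x g < c := by
  rw [odeField, div_lt_iff_of_neg (mul_neg_of_pos_of_neg hx hg)]
  -- `g + g² - c x g - P x ≥ (g - c x)(1 + g) > 0`
  nlinarith [mul_pos (sub_pos.2 hcg) (by linarith : (0 : ℝ) < 1 + g)]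

theorem odeField_pos_of_lt_nullclineRoot (hx : 0 < x) (hg : g < 0) (hg' : -(1 / 2) ≤ g)
    (hP : -(1 / 4) < P x) (hgr : g < nullclineRoot (P x)) : 0 < odeField P x g := by
  have hfac : g + g ^ 2 - P x = (g - nullclineRoot (P x)) * (1 + g + nullclineRoot (P x)) := by
    linear_combination nullclineRoot_add_sq hP.le
  have hr := neg_half_lt_nullclineRoot hP
  refine div_pos_of_neg_of_neg ?_ (mul_neg_of_pos_of_neg hx hg)
  rw [hfac]
  exact mul_neg_of_neg_of_pos (by linarith) (by linarith)

end OdeField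

section Comparison

variable {P γ : ℝ → ℝ} {xstar : ℝ}

theorem neg_half_le_of_hasDerivAt_odeField
    (hode : ∀ x ∈ Ioc 0 xstar, HasDerivAt γ (odeField P x (γ x)) x)
    (hlim : Tendsto γ (𝓝[>] 0) (𝓝 0)) (hPgt : ∀ x ∈ Ioc 0 xstar, -(1 / 4) < P x) :
    ∀ x ∈ Ioc 0 xstar, -(1 / 2) ≤ γ x := by
  intro x₀ hx₀
  have hsub := fun x (hx : x ∈ Ioc 0 x₀) => Ioc_subset_Ioc_right hx₀.2 hx
  have hfreq : ∃ᶠ x in 𝓝[>] 0, -γ x ≤ 1 / 2 :=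
    (hlim.neg.eventually (eventually_le_nhds (by norm_num))).frequently
  have := le_of_frequently_le_of_deriv_neg_of_eq (h := fun x => -γ x) hx₀.1
    (fun x hx => (hode x (hsub x hx)).neg) hfreq fun x hx hγx => by
      rw [neg_eq_iff_eq_neg.1 hγx, neg_lt_zero]
      exact odeField_neg_half_pos hx.1 (hPgt x (hsub x hx))
  linarith

theorem le_mul_of_hasDerivAt_odeField {c : ℝ}
    (hode : ∀ x ∈ Ioc 0 xstar, HasDerivAt γ (odeField P x (γ x)) x)
    (hlim : Tendsto γ (𝓝[>] 0) (𝓝 0)) (hneg : ∀ x ∈ Ioc 0 xstar, γ x < 0)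
    (hhalf : ∀ x ∈ Ioc 0 xstar, -(1 / 2) ≤ γ x) (hP : ∀ x ∈ Ioc 0 xstar, P x ≤ c * x) :
    ∀ x ∈ Ioc 0 xstar, γ x ≤ c * x := by
  intro x₀ hx₀
  have hsub := fun x (hx : x ∈ Ioc 0 x₀) => Ioc_subset_Ioc_right hx₀.2 hx
  have hlim' : Tendsto (fun x => γ x - c * x) (𝓝[>] 0) (𝓝 0) := by
    simpa using hlim.sub (((continuous_const_mul c).tendsto 0).mono_left nhdsWithin_le_nhds)
  have := nonpos_of_tendsto_zero_of_deriv_neg_of_pos (h := fun x => γ x - c * x) hx₀.1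
    (fun x hx => (hode x (hsub x hx)).sub
      (((hasDerivAt_id' x).const_mul c).congr_deriv (mul_one c)))
    hlim' fun x hx hpos => by
      have hx' := hsub x hx
      exact sub_neg.2 (odeField_lt_of_mul_lt hx.1 (hneg x hx') (hhalf x hx') (hP x hx')
        (sub_pos.1 hpos))
  linarith

theorem nullclineRoot_le_of_hasDerivAt_odeField
    (hode : ∀ x ∈ Ioc 0 xstar, HasDerivAt γ (odeField P x (γ x)) x)
    (hlim : Tendsto γ (𝓝[>] 0) (𝓝 0)) (hneg : ∀ x ∈ Ioc 0 xstar, γ x < 0)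
    (hhalf : ∀ x ∈ Ioc 0 xstar, -(1 / 2) ≤ γ x) (hP : Differentiable ℝ P) (hP0 : P 0 = 0)
    (hPgt : ∀ x ∈ Ioc 0 xstar, -(1 / 4) < P x) (hP' : ∀ x ∈ Ioc 0 xstar, deriv P x ≤ 0) :
    ∀ x ∈ Ioc 0 xstar, nullclineRoot (P x) ≤ γ x := by
  intro x₀ hx₀
  have hsub := fun x (hx : x ∈ Ioc 0 x₀) => Ioc_subset_Ioc_right hx₀.2 hx
  have hroot : Tendsto (fun x => nullclineRoot (P x)) (𝓝[>] 0) (𝓝 0) := by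
    have := (continuous_nullclineRoot.comp hP.continuous).tendsto 0
    rw [Function.comp_apply, hP0, nullclineRoot_zero] at this
    exact this.mono_left nhdsWithin_le_nhds
  have := nonpos_of_tendsto_zero_of_deriv_neg_of_pos
    (h := fun x => nullclineRoot (P x) - γ x) hx₀.1
    (fun x hx => ((hP x).hasDerivAt.nullclineRoot (hPgt x (hsub x hx))).sub (hode x (hsub x hx)))
    (by simpa using hroot.sub hlim) fun x hx hpos => by
      have hx' := hsub x hx
      have hflow := odeField_pos_of_lt_nullclineRoot hx.1 (hneg x hx') (hhalf x hx') (hPgt x hx')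
        (sub_pos.1 hpos)
      have hderiv := div_nonpos_of_nonpos_of_nonneg (hP' x hx') (Real.sqrt_nonneg (1 + 4 * P x))
      linarith
  linarith

end Comparison

theorem exists_abs_sub_deriv_mul_le_mul_sq {P γ : ℝ → ℝ} {xstar : ℝ} (hP : Differentiable ℝ P)
    (hP' : DifferentiableAt ℝ (deriv P) 0) (hP0 : P 0 = 0)
    (hanti : AntitoneOn (deriv P) (Icc 0 xstar)) (hPgt : ∀ x ∈ Ioc 0 xstar, -(1 / 4) < P x)
    (hlow : ∀ x ∈ Ioc 0 xstar, nullclineRoot (P x) ≤ γ x)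
    (hup : ∀ x ∈ Ioc 0 xstar, γ x ≤ deriv P 0 * x) :
    ∃ C > 0, ∀ x ∈ Ioc 0 xstar, |γ x - deriv P 0 * x| ≤ C * x ^ 2 := by
  obtain ⟨M, hM⟩ := hanti.exists_taylor_sub_le_mul_sq hP hP'
  set A := |deriv P 0| + |deriv P xstar|
  refine ⟨|M| + 4 * A ^ 2 + 1, by positivity, fun x hx => ?_⟩
  have hxI : x ∈ Icc 0 xstar := Ioc_subset_Icc_self hx
  have htaylor : deriv P 0 * x - P x ≤ M * x ^ 2 := by simpa [hP0] using hM x hxI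
  have hPx : |P x| ≤ A * x := by simpa [hP0] using hanti.abs_sub_le_mul hP x hxI
  have hroot : nullclineRoot (P x) ^ 2 ≤ 4 * (A * x) ^ 2 := by
    have := sq_le_sq' (abs_le.1 hPx).1 (abs_le.1 hPx).2
    linarith [nullclineRoot_sq_le (hPgt x hx)]
  rw [abs_of_nonpos (sub_nonpos.2 (hup x hx)), neg_sub]
  calc deriv P 0 * x - γ x ≤ (deriv P 0 * x - P x) + nullclineRoot (P x) ^ 2 := by
        linarith [hlow x hx, nullclineRoot_add_sq (hPgt x hx).le]
    _ ≤ M * x ^ 2 + 4 * (A * x) ^ 2 := add_le_add htaylor hroot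
    _ ≤ (|M| + 4 * A ^ 2 + 1) * x ^ 2 := by nlinarith [le_abs_self M, sq_nonneg x]

theorem qcd_asymptotically_free_bounds_general
    (P : ℝ → ℝ) (xstar : ℝ)
    (hP1 : Differentiable ℝ P) (hP2 : Differentiable ℝ (deriv P))
    (hP0 : P 0 = 0) (hP'0 : deriv P 0 < 0)
    (hPgt : ∀ x ∈ Icc (0 : ℝ) xstar, -(1 / 4 : ℝ) < P x)
    (hconc : ∀ x ∈ Icc (0 : ℝ) xstar, deriv (deriv P) x ≤ 0)
    (γ : ℝ → ℝ)
    (hode : ∀ x ∈ Ioc (0 : ℝ) xstar,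
      HasDerivAt γ ((γ x + γ x ^ 2 - P x) / (x * γ x)) x)
    (hneg : ∀ x ∈ Ioc (0 : ℝ) xstar, γ x < 0)
    (hlim : Tendsto γ (nhdsWithin 0 (Ioi 0)) (nhds 0)) :
    (∀ x ∈ Ioc (0 : ℝ) xstar,
      (Real.sqrt (1 + 4 * P x) - 1) / 2 ≤ γ x ∧ γ x ≤ deriv P 0 * x) ∧
    ∃ C > 0, ∀ x ∈ Ioc (0 : ℝ) xstar, |γ x - deriv P 0 * x| ≤ C * x ^ 2 := by
  have hanti : AntitoneOn (deriv P) (Icc 0 xstar) :=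
    antitoneOn_of_deriv_nonpos (convex_Icc 0 xstar) hP2.continuous.continuousOn
      hP2.differentiableOn fun x hx => hconc x (interior_subset hx)
  have hPgt' : ∀ x ∈ Ioc 0 xstar, -(1 / 4) < P x := fun x hx => hPgt x (Ioc_subset_Icc_self hx)
  have hPle : ∀ x ∈ Ioc 0 xstar, P x ≤ deriv P 0 * x := fun x hx => by
    simpa [hP0] using
      (hanti.mono (Icc_subset_Icc_right hx.2)).sub_le_deriv_mul hP1.differentiableOn hx.1.le
  have hP'neg : ∀ x ∈ Ioc 0 xstar, deriv P x ≤ 0 := fun x hx =>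
    (hanti ⟨le_rfl, hx.1.le.trans hx.2⟩ (Ioc_subset_Icc_self hx) hx.1.le).trans hP'0.le
  have hhalf := neg_half_le_of_hasDerivAt_odeField hode hlim hPgt'
  have hup := le_mul_of_hasDerivAt_odeField hode hlim hneg hhalf hPle
  have hlow := nullclineRoot_le_of_hasDerivAt_odeField hode hlim hneg hhalf hP1 hP0 hPgt' hP'neg
  exact ⟨fun x hx => ⟨hlow x hx, hup x hx⟩,
    exists_abs_sub_deriv_mul_le_mul_sq hP1 (hP2 0) hP0 hanti hPgt' hlow hup⟩

/-- the asymptotically free solution `γ₁*` (the solution on `(0,x*]`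
tending to `0` at `0⁺`) satisfies the two-sided bound
`(√(1+4P x) − 1)/2 ≤ γ₁*(x) ≤ P'(0)·x` on `(0,x*]`, and consequently
`γ₁*(x) = P'(0)x + O(x²)` as `x → 0`. -/
theorem qcd_asymptotically_free_bounds
    (P : ℝ → ℝ) (xstar : ℝ) (hxstar : 0 < xstar)
    (hP1 : Differentiable ℝ P) (hP2 : Differentiable ℝ (deriv P))
    (hP0 : P 0 = 0) (hP'0 : deriv P 0 < 0) (hP''0 : deriv (deriv P) 0 < 0)
    (hPgt : ∀ x ∈ Icc (0 : ℝ) xstar, -(1 / 4 : ℝ) < P x)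
    (hconc : ∀ x ∈ Icc (0 : ℝ) xstar, deriv (deriv P) x ≤ 0)
    (γ : ℝ → ℝ)
    (hode : ∀ x ∈ Ioc (0 : ℝ) xstar,
      HasDerivAt γ ((γ x + γ x ^ 2 - P x) / (x * γ x)) x)
    (hneg : ∀ x ∈ Ioc (0 : ℝ) xstar, γ x < 0)
    (hlim : Tendsto γ (nhdsWithin 0 (Ioi 0)) (nhds 0)) :
    (∀ x ∈ Ioc (0 : ℝ) xstar,
      (Real.sqrt (1 + 4 * P x) - 1) / 2 ≤ γ x ∧ γ x ≤ deriv P 0 * x) ∧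
    ∃ C > 0, ∀ x ∈ Ioc (0 : ℝ) xstar, |γ x - deriv P 0 * x| ≤ C * x ^ 2 :=
  qcd_asymptotically_free_bounds_general P xstar hP1 hP2 hP0 hP'0 hPgt hconc γ hode hneg hlim
end

section
/- Assume H1–H3 (in particular P(x) < 0 for all x > 0). If γ₁ solves γ' = (γ+γ²−P)/(xγ) with γ₁(x₀) > 0 for some x₀ > 0, then γ₁ exists for all x ≥ x₀ and satisfies 0 < x·S_P(x₀,x) ≤ γ₁(x) ≤ x·S_P(x₀,x) + x/x₀ − 1, where S_P(x₀,x) = √(γ₁(x₀)²/x₀² + 2∫_{x₀}^x (−P(z))/z³ dz). -/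
/-!
Along a solution, `γ' > 0` wherever `γ > 0`, so `γ` never drops below `γ x₀`. With `u = γ / x` and
`S = S_P(x₀, ·)` one computes `(u² - S²)' = 2γ / x³ ≥ 0`, which gives `x S ≤ γ`, and then
`(u - S + 1/x)' = (-P / x²) (1/γ - 1/(x S)) ≤ 0`, which integrates to the upper bound.
-/

open Set intervalIntegral

theorem monotoneOn_Ici_of_hasDerivAt_nonneg {f f' : ℝ → ℝ} {a : ℝ}
    (hf : ∀ x ∈ Ici a, HasDerivAt f (f' x) x) (hf' : ∀ x ∈ Ioi a, 0 ≤ f' x) :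
    MonotoneOn f (Ici a) :=
  monotoneOn_of_hasDerivWithinAt_nonneg (convex_Ici a)
    (fun x hx => (hf x hx).continuousAt.continuousWithinAt)
    (fun x hx => (hf x (interior_subset hx)).hasDerivWithinAt)
    (by simpa only [interior_Ici] using hf')

theorem antitoneOn_Ici_of_hasDerivAt_nonpos {f f' : ℝ → ℝ} {a : ℝ}
    (hf : ∀ x ∈ Ici a, HasDerivAt f (f' x) x) (hf' : ∀ x ∈ Ioi a, f' x ≤ 0) :
    AntitoneOn f (Ici a) :=
  antitoneOn_of_hasDerivWithinAt_nonpos (convex_Ici a)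
    (fun x hx => (hf x hx).continuousAt.continuousWithinAt)
    (fun x hx => (hf x (interior_subset hx)).hasDerivWithinAt)
    (by simpa only [interior_Ici] using hf')

theorem const_le_of_hasDerivAt_pos_of_eq {g g' : ℝ → ℝ} {a c : ℝ}
    (hg : ∀ x ∈ Ici a, HasDerivAt g (g' x) x) (ha : c ≤ g a)
    (hc : ∀ x ∈ Ici a, g x = c → 0 < g' x) : ∀ x ∈ Ici a, c ≤ g x := by
  intro x hx
  have := image_le_of_deriv_right_lt_deriv_boundary (f := fun y => -g y) (f' := fun y => -g' y)
    (B := fun _ => -c) (B' := fun _ => 0) (b := x)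
    (fun y hy => (hg y hy.1).neg.continuousAt.continuousWithinAt)
    (fun y hy => (hg y hy.1).neg.hasDerivWithinAt) (neg_le_neg ha)
    (fun _ => hasDerivAt_const _ _)
    (fun y hy hyc => by simpa using hc y hy.1 (neg_inj.mp hyc))
    ⟨hx, le_rfl⟩
  simpa using this

def SolvesODEFrom (P γ : ℝ → ℝ) (x₀ : ℝ) : Prop :=
  ∀ x ∈ Ici x₀, HasDerivAt γ ((γ x + γ x ^ 2 - P x) / (x * γ x)) x

noncomputable def slopeSq (P γ : ℝ → ℝ) (x₀ x : ℝ) : ℝ :=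
  γ x₀ ^ 2 / x₀ ^ 2 + 2 * ∫ z in x₀..x, -P z / z ^ 3

noncomputable def slopeFunction (P γ : ℝ → ℝ) (x₀ x : ℝ) : ℝ := √(slopeSq P γ x₀ x)

section
variable {P γ : ℝ → ℝ} {x₀ : ℝ}

theorem slopeSq_self : slopeSq P γ x₀ x₀ = (γ x₀ / x₀) ^ 2 := by
  simp [slopeSq, div_pow]

theorem slopeFunction_self (h : 0 ≤ γ x₀ / x₀) : slopeFunction P γ x₀ x₀ = γ x₀ / x₀ := by
  rw [slopeFunction, slopeSq_self, Real.sqrt_sq h]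

theorem hasDerivAt_slopeSq (hP : Continuous P) (hx₀ : 0 < x₀) {x : ℝ} (hx : 0 < x) :
    HasDerivAt (slopeSq P γ x₀) (2 * (-P x / x ^ 3)) x := by
  have hcont : ContinuousOn (fun z => -P z / z ^ 3) (Ioi 0) :=
    hP.neg.continuousOn.div (continuous_pow 3).continuousOn fun z hz => pow_ne_zero 3 hz.ne'
  have hint : IntervalIntegrable (fun z => -P z / z ^ 3) MeasureTheory.volume x₀ x :=
    (hcont.mono fun z hz => lt_of_lt_of_le (lt_min hx₀ hx) hz.1).intervalIntegrable
  exact ((integral_hasDerivAt_right hint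
    (hcont.stronglyMeasurableAtFilter isOpen_Ioi x hx)
    (hcont.continuousAt (Ioi_mem_nhds hx))).const_mul 2).const_add _

theorem slopeSq_pos (hPnonpos : ∀ x ∈ Ici x₀, P x ≤ 0) (hx₀ : 0 < x₀)
    (hγ : γ x₀ ≠ 0) {x : ℝ} (hx : x₀ ≤ x) : 0 < slopeSq P γ x₀ x := by
  have : 0 ≤ ∫ z in x₀..x, -P z / z ^ 3 :=
    integral_nonneg hx fun z hz =>
      div_nonneg (neg_nonneg.mpr (hPnonpos z hz.1)) (pow_nonneg (hx₀.le.trans hz.1) 3)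
  unfold slopeSq
  positivity

theorem slopeFunction_pos (hPnonpos : ∀ x ∈ Ici x₀, P x ≤ 0) (hx₀ : 0 < x₀)
    (hγ : γ x₀ ≠ 0) {x : ℝ} (hx : x₀ ≤ x) : 0 < slopeFunction P γ x₀ x :=
  Real.sqrt_pos.mpr (slopeSq_pos hPnonpos hx₀ hγ hx)

theorem hasDerivAt_div_id_of_solves {x : ℝ} (hx : x ≠ 0) (hγx : γ x ≠ 0)
    (h : HasDerivAt γ ((γ x + γ x ^ 2 - P x) / (x * γ x)) x) :
    HasDerivAt (fun z => γ z / z) ((1 - P x / γ x) / x ^ 2) x := by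
  refine (h.div (hasDerivAt_id' x) hx).congr_deriv ?_
  field_simp
  ring

namespace SolvesODEFrom

theorem initial_le_apply (hode : SolvesODEFrom P γ x₀) (hx₀ : 0 < x₀)
    (hPnonpos : ∀ x ∈ Ici x₀, P x ≤ 0) (hpos : 0 < γ x₀) : ∀ x ∈ Ici x₀, γ x₀ ≤ γ x :=
  const_le_of_hasDerivAt_pos_of_eq hode le_rfl fun x hx hγx => by
    rw [hγx]
    exact div_pos (by nlinarith [hPnonpos x hx]) (mul_pos (hx₀.trans_le hx) hpos)

theorem mul_slopeFunction_le (hode : SolvesODEFrom P γ x₀) (hP : Continuous P)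
    (hPnonpos : ∀ x ∈ Ici x₀, P x ≤ 0) (hx₀ : 0 < x₀) (hpos : 0 < γ x₀) :
    ∀ x ∈ Ici x₀, x * slopeFunction P γ x₀ x ≤ γ x := by
  have hγ := hode.initial_le_apply hx₀ hPnonpos hpos
  have hderiv : ∀ x ∈ Ici x₀, HasDerivAt (fun z => (γ z / z) ^ 2 - slopeSq P γ x₀ z)
      (2 * γ x / x ^ 3) x := by
    intro x hx
    have hx' : 0 < x := hx₀.trans_le hx
    have hγx : 0 < γ x := hpos.trans_le (hγ x hx)
    refine (((hasDerivAt_div_id_of_solves hx'.ne' hγx.ne' (hode x hx)).fun_pow 2).fun_sub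
      (hasDerivAt_slopeSq (γ := γ) hP hx₀ hx')).congr_deriv ?_
    norm_num only
    field_simp
    ring
  have hmono := monotoneOn_Ici_of_hasDerivAt_nonneg hderiv fun x hx =>
    div_nonneg (mul_nonneg zero_le_two (hpos.trans_le (hγ x (mem_Ici.mpr hx.le))).le)
      (pow_nonneg (hx₀.trans hx).le 3)
  intro x hx
  have hsq := hmono self_mem_Ici hx hx
  simp only [slopeSq_self, sub_self, sub_nonneg] at hsq
  have hx' : 0 < x := hx₀.trans_le hx
  rw [← le_div_iff₀' hx']
  calc slopeFunction P γ x₀ x ≤ √((γ x / x) ^ 2) := Real.sqrt_le_sqrt hsq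
    _ = γ x / x := Real.sqrt_sq (div_nonneg (hpos.trans_le (hγ x hx)).le hx'.le)

theorem le_mul_slopeFunction_add (hode : SolvesODEFrom P γ x₀) (hP : Continuous P)
    (hPnonpos : ∀ x ∈ Ici x₀, P x ≤ 0) (hx₀ : 0 < x₀) (hpos : 0 < γ x₀) :
    ∀ x ∈ Ici x₀, γ x ≤ x * slopeFunction P γ x₀ x + x / x₀ - 1 := by
  have hγ := hode.initial_le_apply hx₀ hPnonpos hpos
  have hlow := hode.mul_slopeFunction_le hP hPnonpos hx₀ hpos
  have hderiv : ∀ x ∈ Ici x₀, HasDerivAt (fun z => γ z / z - slopeFunction P γ x₀ z + z⁻¹)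
      (-P x / x ^ 2 * (1 / γ x - 1 / (x * slopeFunction P γ x₀ x))) x := by
    intro x hx
    have hx' : 0 < x := hx₀.trans_le hx
    have hγx : 0 < γ x := hpos.trans_le (hγ x hx)
    have hS : 0 < slopeSq P γ x₀ x := slopeSq_pos hPnonpos hx₀ hpos.ne' hx
    refine (((hasDerivAt_div_id_of_solves hx'.ne' hγx.ne' (hode x hx)).fun_sub
      ((hasDerivAt_slopeSq (γ := γ) hP hx₀ hx').sqrt hS.ne')).fun_add
      (hasDerivAt_inv hx'.ne')).congr_deriv ?_
    simp only [slopeFunction]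
    field_simp
    ring
  have hanti := antitoneOn_Ici_of_hasDerivAt_nonpos hderiv fun x hx => by
    have hx' : x ∈ Ici x₀ := mem_Ici.mpr hx.le
    refine mul_nonpos_of_nonneg_of_nonpos
      (div_nonneg (neg_nonneg.mpr (hPnonpos x hx')) (sq_nonneg x)) (sub_nonpos.mpr ?_)
    exact one_div_le_one_div_of_le
      (mul_pos (hx₀.trans hx) (slopeFunction_pos hPnonpos hx₀ hpos.ne' hx')) (hlow x hx')
  intro x hx
  have hx' : 0 < x := hx₀.trans_le hx
  have h : γ x / x - slopeFunction P γ x₀ x + x⁻¹ ≤ x₀⁻¹ := by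
    simpa [slopeFunction_self (div_nonneg hpos.le hx₀.le)] using hanti self_mem_Ici hx hx
  calc γ x = x * (γ x / x - slopeFunction P γ x₀ x + x⁻¹) + x * slopeFunction P γ x₀ x - 1 := by
        field_simp
        ring
    _ ≤ x * x₀⁻¹ + x * slopeFunction P γ x₀ x - 1 := by gcongr
    _ = x * slopeFunction P γ x₀ x + x / x₀ - 1 := by ring

end SolvesODEFrom
end

theorem qcd_first_quadrant_global_bounds_general
    (P : ℝ → ℝ) (hPcont : Continuous P)
    (hPneg : ∀ x > (0 : ℝ), P x < 0)
    (γ : ℝ → ℝ) (x₀ : ℝ) (hx₀ : 0 < x₀)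
    (hode : ∀ x ∈ Ici x₀,
      HasDerivAt γ ((γ x + γ x ^ 2 - P x) / (x * γ x)) x)
    (hpos : 0 < γ x₀) :
    ∀ x ∈ Ici x₀,
      0 < x * Real.sqrt (γ x₀ ^ 2 / x₀ ^ 2 + 2 * ∫ z in x₀..x, -P z / z ^ 3) ∧
      x * Real.sqrt (γ x₀ ^ 2 / x₀ ^ 2 + 2 * ∫ z in x₀..x, -P z / z ^ 3) ≤ γ x ∧
      γ x ≤ x * Real.sqrt (γ x₀ ^ 2 / x₀ ^ 2 + 2 * ∫ z in x₀..x, -P z / z ^ 3)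
              + x / x₀ - 1 := by
  have hPnonpos : ∀ x ∈ Ici x₀, P x ≤ 0 := fun x hx => (hPneg x (hx₀.trans_le hx)).le
  intro x hx
  exact ⟨mul_pos (hx₀.trans_le hx) (slopeFunction_pos hPnonpos hx₀ hpos.ne' hx),
    SolvesODEFrom.mul_slopeFunction_le hode hPcont hPnonpos hx₀ hpos x hx,
    SolvesODEFrom.le_mul_slopeFunction_add hode hPcont hPnonpos hx₀ hpos x hx⟩

/-- solutions in the first quadrant are global and grow essentially
linearly: if `γ` solves the ODE for all `x ≥ x₀` with `γ x₀ > 0`, then for all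
`x ≥ x₀`, `0 < x·S_P(x₀,x) ≤ γ x ≤ x·S_P(x₀,x) + x/x₀ − 1`, where
`S_P(x₀,x) = √(γ(x₀)²/x₀² + 2∫_{x₀}^x (−P z)/z³ dz)`. -/
theorem qcd_first_quadrant_global_bounds
    (P : ℝ → ℝ) (hPcont : Continuous P)
    (hP0 : P 0 = 0) (hP'0 : deriv P 0 < 0)
    (hPneg : ∀ x > (0 : ℝ), P x < 0)
    (γ : ℝ → ℝ) (x₀ : ℝ) (hx₀ : 0 < x₀)
    (hode : ∀ x ∈ Ici x₀,
      HasDerivAt γ ((γ x + γ x ^ 2 - P x) / (x * γ x)) x)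
    (hpos : 0 < γ x₀) :
    ∀ x ∈ Ici x₀,
      0 < x * Real.sqrt (γ x₀ ^ 2 / x₀ ^ 2 + 2 * ∫ z in x₀..x, -P z / z ^ 3) ∧
      x * Real.sqrt (γ x₀ ^ 2 / x₀ ^ 2 + 2 * ∫ z in x₀..x, -P z / z ^ 3) ≤ γ x ∧
      γ x ≤ x * Real.sqrt (γ x₀ ^ 2 / x₀ ^ 2 + 2 * ∫ z in x₀..x, -P z / z ^ 3)
              + x / x₀ - 1 :=
  qcd_first_quadrant_global_bounds_general P hPcont hPneg γ x₀ hx₀ hode hpos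
end

section
/- Assume P(x) < 0 for all x > 0 and P continuous. If γ₁ is a negative solution of γ' = (γ+γ²−P)/(xγ) on [x₀, x₁] ⊂ (0,∞), then (1/2)·d/dx(γ₁(x)²) ≤ (γ₁(x)² − P(x))/x, and hence γ₁(x) ≥ −x·S_P(x₀,x) for all x ∈ [x₀,x₁], where S_P(x₀,x) = √(γ₁(x₀)²/x₀² + 2∫_{x₀}^x (−P(z))/z³ dz). -/
/-!
Along a solution, `(γ²)' = 2(γ + γ² - P)/x`, so `(γ²/x²)' = 2γ/x³ + 2(-P)/x³`. When `γ < 0` the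
first term is negative, which gives both the differential inequality and, after integrating from
`x₀`, the bound `γ(x)²/x² ≤ S_P(x₀,x)²`; taking square roots yields `γ(x) ≥ -x·S_P(x₀,x)`.
-/

open Set intervalIntegral MeasureTheory

section NegativeSolution

variable {P γ : ℝ → ℝ} {x : ℝ}

lemma hasDerivAt_sq_of_ode (hode : HasDerivAt γ ((γ x + γ x ^ 2 - P x) / (x * γ x)) x)
    (hγ : γ x ≠ 0) :
    HasDerivAt (fun y => γ y ^ 2) (2 * ((γ x + γ x ^ 2 - P x) / x)) x := by
  refine (hode.fun_pow 2).congr_deriv ?_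
  field_simp
  ring

lemma hasDerivAt_sq_div_sq_of_ode (hode : HasDerivAt γ ((γ x + γ x ^ 2 - P x) / (x * γ x)) x)
    (hx : x ≠ 0) (hγ : γ x ≠ 0) :
    HasDerivAt (fun y => γ y ^ 2 / y ^ 2) (2 * (γ x - P x) / x ^ 3) x := by
  refine ((hasDerivAt_sq_of_ode hode hγ).fun_div (hasDerivAt_pow 2 x)
    (pow_ne_zero 2 hx)).congr_deriv ?_
  field_simp
  ring

lemma deriv_sq_div_two_le_of_ode (hode : HasDerivAt γ ((γ x + γ x ^ 2 - P x) / (x * γ x)) x)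
    (hx : 0 < x) (hγ : γ x < 0) :
    deriv (fun y => γ y ^ 2) x / 2 ≤ (γ x ^ 2 - P x) / x := by
  rw [(hasDerivAt_sq_of_ode hode hγ.ne).deriv]
  have hsplit : 2 * ((γ x + γ x ^ 2 - P x) / x) / 2 = γ x / x + (γ x ^ 2 - P x) / x := by ring
  linarith [div_neg_of_neg_of_pos hγ hx]

lemma sq_div_sq_le_add_integral_of_ode {x₀ : ℝ} (hPcont : ContinuousOn P (Ioi 0))
    (hx₀ : 0 < x₀) (hx₀x : x₀ ≤ x)
    (hode : ∀ z ∈ Icc x₀ x, HasDerivAt γ ((γ z + γ z ^ 2 - P z) / (z * γ z)) z)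
    (hneg : ∀ z ∈ Icc x₀ x, γ z < 0) :
    γ x ^ 2 / x ^ 2 ≤ γ x₀ ^ 2 / x₀ ^ 2 + 2 * ∫ z in x₀..x, -P z / z ^ 3 := by
  have hpos : ∀ z ∈ Icc x₀ x, 0 < z := fun z hz => hx₀.trans_le hz.1
  have hderiv : ∀ z ∈ Icc x₀ x,
      HasDerivAt (fun y => γ y ^ 2 / y ^ 2) (2 * (γ z - P z) / z ^ 3) z := fun z hz =>
    hasDerivAt_sq_div_sq_of_ode (hode z hz) (hpos z hz).ne' (hneg z hz).ne
  have hint : IntegrableOn (fun z => 2 * (-P z / z ^ 3)) (Icc x₀ x) :=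
    (continuousOn_const.mul ((hPcont.mono fun z hz => hpos z hz).neg.div
      (continuousOn_pow 3) fun z hz => pow_ne_zero 3 (hpos z hz).ne')).integrableOn_Icc
  have hslope : ∀ z ∈ Ioo x₀ x, 2 * (γ z - P z) / z ^ 3 ≤ 2 * (-P z / z ^ 3) := by
    intro z hz
    have hz' := Ioo_subset_Icc_self hz
    have hsplit : 2 * (γ z - P z) / z ^ 3 = 2 * (-P z / z ^ 3) + 2 * (γ z / z ^ 3) := by ring
    linarith [div_neg_of_neg_of_pos (hneg z hz') (pow_pos (hpos z hz') 3)]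
  have hcomp := sub_le_integral_of_hasDeriv_right_of_le hx₀x
    (fun z hz => (hderiv z hz).continuousAt.continuousWithinAt)
    (fun z hz => (hderiv z (Ioo_subset_Icc_self hz)).hasDerivWithinAt) hint hslope
  rw [intervalIntegral.integral_const_mul] at hcomp
  linarith

end NegativeSolution

lemma neg_mul_sqrt_le_of_sq_div_sq_le {a x R : ℝ} (hx : 0 < x) (h : a ^ 2 / x ^ 2 ≤ R) :
    -(x * Real.sqrt R) ≤ a := by
  have habs : |a / x| ≤ Real.sqrt R := Real.abs_le_sqrt (by rwa [div_pow])
  have hle : -a / x ≤ Real.sqrt R := by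
    rw [neg_div]
    exact (neg_le_abs _).trans habs
  rw [div_le_iff₀ hx] at hle
  linarith

theorem qcd_lower_bound_negative_solution_general
    (P : ℝ → ℝ) (hPcont : ContinuousOn P (Ioi 0))
    (γ : ℝ → ℝ) (x₀ x₁ : ℝ) (hx₀ : 0 < x₀)
    (hode : ∀ x ∈ Icc x₀ x₁,
      HasDerivAt γ ((γ x + γ x ^ 2 - P x) / (x * γ x)) x)
    (hneg : ∀ x ∈ Icc x₀ x₁, γ x < 0) :
    ∀ x ∈ Icc x₀ x₁,
      deriv (fun y => γ y ^ 2) x / 2 ≤ (γ x ^ 2 - P x) / x ∧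
      -(x * Real.sqrt (γ x₀ ^ 2 / x₀ ^ 2 + 2 * ∫ z in x₀..x, -P z / z ^ 3))
        ≤ γ x := by
  intro x hx
  have hpos : 0 < x := hx₀.trans_le hx.1
  have hsub : Icc x₀ x ⊆ Icc x₀ x₁ := Icc_subset_Icc_right hx.2
  exact ⟨deriv_sq_div_two_le_of_ode (hode x hx) hpos (hneg x hx),
    neg_mul_sqrt_le_of_sq_div_sq_le hpos <| sq_div_sq_le_add_integral_of_ode hPcont hx₀ hx.1
      (fun z hz => hode z (hsub hz)) (fun z hz => hneg z (hsub hz))⟩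

/-- for a negative solution on `[x₀,x₁] ⊂ (0,∞)` of the ODE (with
`P < 0` continuous), one has the differential inequality
`(1/2)·d/dx(γ²) ≤ (γ² − P)/x`, and hence `γ x ≥ −x·S_P(x₀,x)` on `[x₀,x₁]`. -/
theorem qcd_lower_bound_negative_solution
    (P : ℝ → ℝ) (hPcont : ContinuousOn P (Ioi 0))
    (hPneg : ∀ x > (0 : ℝ), P x < 0)
    (γ : ℝ → ℝ) (x₀ x₁ : ℝ) (hx₀ : 0 < x₀) (hx₀₁ : x₀ ≤ x₁)
    (hode : ∀ x ∈ Icc x₀ x₁,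
      HasDerivAt γ ((γ x + γ x ^ 2 - P x) / (x * γ x)) x)
    (hneg : ∀ x ∈ Icc x₀ x₁, γ x < 0) :
    ∀ x ∈ Icc x₀ x₁,
      deriv (fun y => γ y ^ 2) x / 2 ≤ (γ x ^ 2 - P x) / x ∧
      -(x * Real.sqrt (γ x₀ ^ 2 / x₀ ^ 2 + 2 * ∫ z in x₀..x, -P z / z ^ 3))
        ≤ γ x :=
  qcd_lower_bound_negative_solution_general P hPcont γ x₀ x₁ hx₀ hode hneg
end

section
/- Assume H1–H3. Any solution γ₁ of γ' = (γ+γ²−P)/(xγ) with γ₁(x*) < 0 exists for all x ≥ x* and satisfies −x·S_P(x*,x) ≤ γ₁(x) ≤ max(γ₁(x*), sup_{z∈[x*,x]} (√(1+4P(z)) − 1)/4) < 0 for all x ≥ x*. In particular, if ∫_{x*}^∞ (−P(z))/z³ dz < ∞ then γ₁ grows at most linearly as x → ∞. -/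
open Set intervalIntegral MeasureTheory

/-!
Since `P < 0`, the curve `(√(1 + 4P) - 1) / 4` lies strictly above the larger root
`(√(1 + 4P) - 1) / 2` of `γ² + γ - P`, so on and above it a negative solution has `γ' < 0`.
Hence every negative level above both `γ(x*)` and this curve is a barrier that the solution
cannot cross upwards, which gives the upper bound and keeps `γ` negative. For negative `γ`
the ODE gives `(γ² / x²)' = 2 (γ - P) / x³ ≤ -2P / x³`, and integrating yields the lower bound.
-/

theorem sqrt_one_add_four_mul_lt_one {p : ℝ} (hp : p < 0) : √(1 + 4 * p) < 1 := by
  rw [Real.sqrt_lt' one_pos]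
  linarith

theorem add_sq_sub_pos_of_sqrt_sub_one_div_four_le {p g : ℝ} (hp : p < 0)
    (hg : (√(1 + 4 * p) - 1) / 4 ≤ g) : 0 < g + g ^ 2 - p := by
  rcases le_or_gt 0 (1 + 4 * p) with hD | hD
  · nlinarith [Real.sq_sqrt hD, Real.sqrt_nonneg (1 + 4 * p), sqrt_one_add_four_mul_lt_one hp]
  · nlinarith [sq_nonneg (2 * g + 1)]

section Riccati

variable {P γ : ℝ → ℝ}

theorem le_of_barrier {a b c : ℝ} (ha : 0 < a) (hc : c < 0)
    (hode : ∀ x ∈ Icc a b, HasDerivAt γ ((γ x + γ x ^ 2 - P x) / (x * γ x)) x)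
    (hP : ∀ x ∈ Icc a b, P x < 0) (hbarrier : ∀ x ∈ Icc a b, (√(1 + 4 * P x) - 1) / 4 ≤ c)
    (hγa : γ a ≤ c) : ∀ x ∈ Icc a b, γ x ≤ c := by
  refine image_le_of_deriv_right_lt_deriv_boundary'
    (fun x hx => (hode x hx).continuousAt.continuousWithinAt)
    (fun x hx => (hode x (Ico_subset_Icc_self hx)).hasDerivWithinAt) hγa continuousOn_const
    (fun x _ => hasDerivWithinAt_const x _ c) fun x hx hγx => ?_
  have hx : x ∈ Icc a b := Ico_subset_Icc_self hx
  have hnum : 0 < γ x + γ x ^ 2 - P x :=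
    add_sq_sub_pos_of_sqrt_sub_one_div_four_le (hP x hx) (hγx ▸ hbarrier x hx)
  have hden : x * γ x < 0 := mul_neg_of_pos_of_neg (ha.trans_le hx.1) (hγx ▸ hc)
  exact div_neg_of_pos_of_neg hnum hden

theorem le_max_sSup_image_barrier_and_lt_zero {a x : ℝ} (ha : 0 < a) (hax : a ≤ x)
    (hPc : ContinuousOn P (Icc a x)) (hP : ∀ z ∈ Icc a x, P z < 0)
    (hode : ∀ z ∈ Icc a x, HasDerivAt γ ((γ z + γ z ^ 2 - P z) / (z * γ z)) z) (hγa : γ a < 0) :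
    γ x ≤ max (γ a) (sSup ((fun z => (√(1 + 4 * P z) - 1) / 4) '' Icc a x)) ∧
      max (γ a) (sSup ((fun z => (√(1 + 4 * P z) - 1) / 4) '' Icc a x)) < 0 := by
  have hcont : ContinuousOn (fun z => (√(1 + 4 * P z) - 1) / 4) (Icc a x) := by fun_prop
  have hsup : sSup ((fun z => (√(1 + 4 * P z) - 1) / 4) '' Icc a x) < 0 :=
    (isCompact_Icc.sSup_lt_iff_of_continuous (nonempty_Icc.2 hax) hcont 0).2 fun z hz => by
      linarith [sqrt_one_add_four_mul_lt_one (hP z hz)]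
  have hc := max_lt hγa hsup
  refine ⟨le_of_barrier ha hc hode hP (fun z hz => ?_) (le_max_left _ _) x ⟨hax, le_rfl⟩, hc⟩
  exact (le_csSup (isCompact_Icc.bddAbove_image hcont) (mem_image_of_mem _ hz)).trans
    (le_max_right _ _)

theorem hasDerivAt_sq_div_sq {x : ℝ} (hx : x ≠ 0)
    (h : HasDerivAt γ ((γ x + γ x ^ 2 - P x) / (x * γ x)) x) (hγ : γ x ≠ 0) :
    HasDerivAt (fun t => γ t ^ 2 / t ^ 2) (2 * (γ x - P x) / x ^ 3) x := by
  refine ((h.pow 2).div (hasDerivAt_pow 2 x) (pow_ne_zero 2 hx)).congr_deriv ?_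
  simp only [Pi.pow_apply, Nat.cast_ofNat]
  field_simp
  ring

theorem sq_div_sq_le {a b : ℝ} (ha : 0 < a) (hab : a ≤ b) (hP : ContinuousOn P (Icc a b))
    (hode : ∀ x ∈ Icc a b, HasDerivAt γ ((γ x + γ x ^ 2 - P x) / (x * γ x)) x)
    (hneg : ∀ x ∈ Icc a b, γ x < 0) :
    γ b ^ 2 / b ^ 2 ≤ γ a ^ 2 / a ^ 2 + 2 * ∫ z in a..b, -P z / z ^ 3 := by
  have hpos : ∀ x ∈ Icc a b, 0 < x := fun x hx => ha.trans_le hx.1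
  have hderiv : ∀ x ∈ Icc a b,
      HasDerivAt (fun t => γ t ^ 2 / t ^ 2) (2 * (γ x - P x) / x ^ 3) x := fun x hx =>
    hasDerivAt_sq_div_sq (hpos x hx).ne' (hode x hx) (hneg x hx).ne
  have hφ : ContinuousOn (fun z => 2 * (-P z / z ^ 3)) (Icc a b) :=
    continuousOn_const.mul <| hP.neg.div (continuousOn_pow 3) fun x hx =>
      (pow_pos (hpos x hx) 3).ne'
  have hle : ∀ x ∈ Ioo a b, 2 * (γ x - P x) / x ^ 3 ≤ 2 * (-P x / x ^ 3) := fun x hx => by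
    have hx := Ioo_subset_Icc_self hx
    have := hpos x hx
    rw [mul_div_assoc']
    gcongr
    linarith [hneg x hx]
  have key := sub_le_integral_of_hasDeriv_right_of_le hab
    (fun x hx => (hderiv x hx).continuousAt.continuousWithinAt)
    (fun x hx => (hderiv x (Ioo_subset_Icc_self hx)).hasDerivWithinAt) hφ.integrableOn_Icc hle
  rw [intervalIntegral.integral_const_mul] at key
  linarith

end Riccati

theorem abs_le_mul_sqrt_of_sq_div_sq_le {x y A : ℝ} (hx : 0 < x) (h : y ^ 2 / x ^ 2 ≤ A) :
    |y| ≤ x * √A := by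
  rw [← div_le_iff₀' hx, ← abs_of_pos hx, ← abs_div]
  exact Real.abs_le_sqrt (by rwa [div_pow])

theorem intervalIntegral_le_integral_Ici {f : ℝ → ℝ} {a b : ℝ} (hab : a ≤ b)
    (hf : IntegrableOn f (Ici a)) (hf0 : ∀ x ∈ Ici a, 0 ≤ f x) :
    ∫ x in a..b, f x ≤ ∫ x in Ici a, f x := by
  rw [integral_of_le hab]
  exact setIntegral_mono_set hf ((ae_restrict_iff' measurableSet_Ici).2 (.of_forall hf0))
    (Ioc_subset_Ioi_self.trans Ioi_subset_Ici_self).eventuallyLE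

theorem qcd_negative_solutions_global_general
    (P : ℝ → ℝ) (xstar : ℝ) (hxstar : 0 < xstar)
    (hP1 : Differentiable ℝ P)
    (hPneg : ∀ x > (0 : ℝ), P x < 0)
    (γ : ℝ → ℝ)
    (hode : ∀ x ∈ Ici xstar,
      HasDerivAt γ ((γ x + γ x ^ 2 - P x) / (x * γ x)) x)
    (hinit : γ xstar < 0) :
    (∀ x ∈ Ici xstar,
      -(x * Real.sqrt (γ xstar ^ 2 / xstar ^ 2 + 2 * ∫ z in xstar..x, -P z / z ^ 3))
          ≤ γ x ∧
      γ x ≤ max (γ xstar)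
          (sSup ((fun z => (Real.sqrt (1 + 4 * P z) - 1) / 4) '' Icc xstar x)) ∧
      max (γ xstar)
          (sSup ((fun z => (Real.sqrt (1 + 4 * P z) - 1) / 4) '' Icc xstar x)) < 0) ∧
    (IntegrableOn (fun z => -P z / z ^ 3) (Ici xstar) →
      ∃ C > 0, ∀ x ∈ Ici xstar, |γ x| ≤ C * x) := by
  have hPneg' : ∀ x ∈ Ici xstar, P x < 0 := fun x hx => hPneg x (hxstar.trans_le hx)
  have hupper := fun x (hx : x ∈ Ici xstar) =>
    le_max_sSup_image_barrier_and_lt_zero hxstar hx hP1.continuous.continuousOn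
      (fun z hz => hPneg' z hz.1) (fun z hz => hode z hz.1) hinit
  have habs : ∀ x ∈ Ici xstar,
      |γ x| ≤ x * √(γ xstar ^ 2 / xstar ^ 2 + 2 * ∫ z in xstar..x, -P z / z ^ 3) :=
    fun x hx => abs_le_mul_sqrt_of_sq_div_sq_le (hxstar.trans_le hx) <|
      sq_div_sq_le hxstar hx hP1.continuous.continuousOn (fun z hz => hode z hz.1)
        fun z hz => (hupper z hz.1).1.trans_lt (hupper z hz.1).2
  refine ⟨fun x hx => ⟨neg_le_of_abs_le (habs x hx), hupper x hx⟩, fun hint => ?_⟩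
  have hint0 : ∀ z ∈ Ici xstar, 0 ≤ -P z / z ^ 3 := fun z hz =>
    div_nonneg (neg_nonneg.2 (hPneg' z hz).le) (pow_pos (hxstar.trans_le hz) 3).le
  refine ⟨√(γ xstar ^ 2 / xstar ^ 2 + 2 * ∫ z in Ici xstar, -P z / z ^ 3) + 1, by positivity,
    fun x hx => (habs x hx).trans ?_⟩
  rw [mul_comm]
  refine mul_le_mul_of_nonneg_right ?_ (hxstar.le.trans hx)
  refine (Real.sqrt_le_sqrt ?_).trans (le_add_of_nonneg_right zero_le_one)
  linarith [intervalIntegral_le_integral_Ici hx hint hint0]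

/-- under H1–H3, any solution with `γ(x*) < 0` is global on
`[x*,∞)` and satisfies
`−x·S_P(x*,x) ≤ γ x ≤ max(γ(x*), sup_{z∈[x*,x]}(√(1+4P z)−1)/4) < 0`;
in particular if `∫_{x*}^∞ (−P z)/z³ dz < ∞` then `γ` grows at most linearly. -/
theorem qcd_negative_solutions_global
    (P : ℝ → ℝ) (xstar : ℝ) (hxstar : 0 < xstar)
    (hP1 : Differentiable ℝ P) (hP2 : Differentiable ℝ (deriv P))
    (hP0 : P 0 = 0) (hP'0 : deriv P 0 < 0) (hP''0 : deriv (deriv P) 0 < 0)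
    (hPgt : ∀ x ∈ Icc (0 : ℝ) xstar, -(1 / 4 : ℝ) < P x)
    (hconc : ∀ x ∈ Icc (0 : ℝ) xstar, deriv (deriv P) x ≤ 0)
    (hPneg : ∀ x > (0 : ℝ), P x < 0)
    (γ : ℝ → ℝ)
    (hode : ∀ x ∈ Ici xstar,
      HasDerivAt γ ((γ x + γ x ^ 2 - P x) / (x * γ x)) x)
    (hinit : γ xstar < 0) :
    (∀ x ∈ Ici xstar,
      -(x * Real.sqrt (γ xstar ^ 2 / xstar ^ 2 + 2 * ∫ z in xstar..x, -P z / z ^ 3))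
          ≤ γ x ∧
      γ x ≤ max (γ xstar)
          (sSup ((fun z => (Real.sqrt (1 + 4 * P z) - 1) / 4) '' Icc xstar x)) ∧
      max (γ xstar)
          (sSup ((fun z => (Real.sqrt (1 + 4 * P z) - 1) / 4) '' Icc xstar x)) < 0) ∧
    (IntegrableOn (fun z => -P z / z ^ 3) (Ici xstar) →
      ∃ C > 0, ∀ x ∈ Ici xstar, |γ x| ≤ C * x) :=
  qcd_negative_solutions_global_general P xstar hxstar hP1 hPneg γ hode hinit
end

section
/- Assume H1–H3 and that there is an interval [x_c,x_d] with x_c > x* such that −∫_{x_c}^{x_d} (1+4P(z))/(2z) dz ≥ 1 (hypothesis S3). Then any solution with −1 < γ₁(x*) < 0 attains the value −1: there exists x₀ > x* with γ₁(x₀) = −1. Key inequality: if −1 < γ₁(x) < 0 on [x_c, x_d], then d/dx(γ₁(x)²) ≥ −(4P(x)+1)/(2x), so γ₁(x_d) ≤ −√(γ₁(x_c)² − ∫_{x_c}^{x_d} (1+4P(z))/(2z) dz) < −1, a contradiction. -/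
open Set intervalIntegral

/-!
Along a solution of `γ' = (γ + γ² - P) / (x γ)` one has
`(γ²)' = 2 (γ + γ² - P) / x ≥ -(1 + 4 P) / (2 x)`, because the difference is `(2γ + 1)² / (2x)`.
Integrating over `[x_c, x_d]` and using S3 gives `γ(x_d)² ≥ 1 + γ(x_c)² ≥ 1`, so the negative
solution satisfies `γ(x_d) ≤ -1`; since `γ(x*) > -1`, the intermediate value theorem finishes.
-/

theorem neg_div_le_two_mul_riccati {x g p : ℝ} (hx : 0 < x) (hg : g ≠ 0) :
    -((1 + 4 * p) / (2 * x)) ≤ 2 * g * ((g + g ^ 2 - p) / (x * g)) := by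
  have hdiff : 2 * g * ((g + g ^ 2 - p) / (x * g)) - -((1 + 4 * p) / (2 * x))
      = (2 * g + 1) ^ 2 / (2 * x) := by
    field_simp
    ring
  have : 0 ≤ (2 * g + 1) ^ 2 / (2 * x) := by positivity
  linarith

theorem neg_integral_le_sq_sub_sq {P γ : ℝ → ℝ} {a b : ℝ} (ha : 0 < a) (hab : a ≤ b)
    (hP : ContinuousOn P (Icc a b))
    (hode : ∀ x ∈ Icc a b, HasDerivAt γ ((γ x + γ x ^ 2 - P x) / (x * γ x)) x)
    (hne : ∀ x ∈ Icc a b, γ x ≠ 0) :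
    -(∫ z in a..b, (1 + 4 * P z) / (2 * z)) ≤ γ b ^ 2 - γ a ^ 2 := by
  have hpos : ∀ z ∈ Icc a b, 0 < z := fun z hz => ha.trans_le hz.1
  have hint : MeasureTheory.IntegrableOn (fun z => -((1 + 4 * P z) / (2 * z))) (Icc a b) :=
    ContinuousOn.integrableOn_Icc <| ContinuousOn.neg <|
      (continuousOn_const.add (continuousOn_const.mul hP)).div
        (continuousOn_const.mul continuousOn_id) fun z hz => (mul_pos two_pos (hpos z hz)).ne'
  rw [← integral_neg]
  refine integral_le_sub_of_hasDeriv_right_of_le hab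
    (fun x hx => ((hode x hx).continuousAt.pow 2).continuousWithinAt)
    (fun x hx => ((hode x (Ioo_subset_Icc_self hx)).pow 2).hasDerivWithinAt) hint
    fun x hx => ?_
  have hx' := Ioo_subset_Icc_self hx
  simpa using neg_div_le_two_mul_riccati (p := P x) (hpos x hx') (hne x hx')

theorem qcd_reaches_minus_one_general
    (P : ℝ → ℝ) (xstar : ℝ) (hxstar : 0 < xstar)
    (hP1 : Differentiable ℝ P)
    (xc xd : ℝ) (hxc : xstar < xc) (hxcd : xc ≤ xd)
    (hS3 : 1 ≤ -(∫ z in xc..xd, (1 + 4 * P z) / (2 * z)))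
    (γ : ℝ → ℝ)
    (hode : ∀ x ∈ Ici xstar,
      HasDerivAt γ ((γ x + γ x ^ 2 - P x) / (x * γ x)) x)
    (hneg : ∀ x ∈ Ici xstar, γ x < 0)
    (hinit : -1 < γ xstar ∧ γ xstar < 0) :
    ∃ x₀ > xstar, γ x₀ = -1 := by
  have hsub : Icc xc xd ⊆ Ici xstar := fun z hz => hxc.le.trans hz.1
  have hsq := neg_integral_le_sq_sub_sq (hxstar.trans hxc) hxcd hP1.continuous.continuousOn
    (fun x hx => hode x (hsub hx)) fun x hx => (hneg x (hsub hx)).ne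
  have hxd : γ xd ≤ -1 := by
    nlinarith [hneg xd (hsub (right_mem_Icc.2 hxcd)), sq_nonneg (γ xc)]
  have hcont : ContinuousOn γ (Icc xstar xd) := fun x hx =>
    (hode x hx.1).continuousAt.continuousWithinAt
  obtain ⟨x₀, ⟨hx₀, -⟩, hγx₀⟩ :=
    intermediate_value_Ioc' (hxc.le.trans hxcd) hcont ⟨hxd, hinit.1⟩
  exact ⟨x₀, hx₀, hγx₀⟩

/-- under H1–H3 and S3 (there is `[x_c,x_d]` with `x_c > x*` and
`−∫_{x_c}^{x_d}(1+4P z)/(2z) dz ≥ 1`), any global solution with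
`−1 < γ(x*) < 0` attains the value `−1` at some `x₀ > x*`. -/
theorem qcd_reaches_minus_one
    (P : ℝ → ℝ) (xstar : ℝ) (hxstar : 0 < xstar)
    (hP1 : Differentiable ℝ P) (hP2 : Differentiable ℝ (deriv P))
    (hP0 : P 0 = 0) (hP'0 : deriv P 0 < 0) (hP''0 : deriv (deriv P) 0 < 0)
    (hPgt : ∀ x ∈ Icc (0 : ℝ) xstar, -(1 / 4 : ℝ) < P x)
    (hconc : ∀ x ∈ Icc (0 : ℝ) xstar, deriv (deriv P) x ≤ 0)
    (hPneg : ∀ x > (0 : ℝ), P x < 0)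
    (xc xd : ℝ) (hxc : xstar < xc) (hxcd : xc ≤ xd)
    (hS3 : 1 ≤ -(∫ z in xc..xd, (1 + 4 * P z) / (2 * z)))
    (γ : ℝ → ℝ)
    (hode : ∀ x ∈ Ici xstar,
      HasDerivAt γ ((γ x + γ x ^ 2 - P x) / (x * γ x)) x)
    (hneg : ∀ x ∈ Ici xstar, γ x < 0)
    (hinit : -1 < γ xstar ∧ γ xstar < 0) :
    ∃ x₀ > xstar, γ x₀ = -1 :=
  qcd_reaches_minus_one_general P xstar hxstar hP1 xc xd hxc hxcd hS3 γ hode hneg hinit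
end

section
/- Let γ₁ ∈ C¹((0,∞)) with γ₁ < 0, and suppose −1 < γ₁(x) ≤ 0 for all x > 0 (γ₁ never reaches −1). Then ∫_x^∞ dz/(z γ₁(z)) = −∞ for every x > 0, i.e. the maximal solution of dX/dt = Xγ₁(X), X(0)=x, exists for all t ∈ ℝ. Conversely, if γ₁(x₀) ≤ −1 for some x₀ and γ₁(x) ≤ −c x for x large (some c > 0), then ∫_x^∞ dz/(zγ₁(z)) is finite and the running coupling blows up at the finite backward time L_∞(x). -/
/-!
Separation of variables: `G(y) = ∫_x^y dz/(z γ(z))` is strictly decreasing on `(0, ∞)` and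
`G(X t) - t` is constant along positive solutions, so solutions are `X = G⁻¹`.
If `-1 ≤ γ < 0` then `|1/(z γ z)| ≥ 1/z`, so the integral diverges and `G` maps `(0, ∞)` onto `ℝ`
(`G(y)` lies beyond `log x - log y`); then `G⁻¹` is a global solution.
If `γ(z) ≤ -c z` eventually, the integrand is `O(z⁻²)` and `G` decreases to `L_∞(x) > -∞`.
Backward in time a solution cannot cross the level `x` downwards (there `X' = x γ(x) < 0`), so it
stays positive on `(L_∞(x), 0]`, where `G(X t) = t`; hence `X t → ∞` as `t ↓ L_∞(x)`.
-/

open Set Filter MeasureTheory Topology Function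

theorem le_of_le_right_of_hasDerivAt_neg_at_level {X X' : ℝ → ℝ} {a b x : ℝ}
    (hX : ∀ t ∈ Icc a b, HasDerivAt X (X' t) t) (hb : x ≤ X b)
    (hlevel : ∀ t ∈ Ioc a b, X t = x → X' t < 0) : ∀ t ∈ Icc a b, x ≤ X t := by
  have hrev : ∀ s ∈ Icc (-b) (-a), HasDerivAt (fun s => -X (-s)) (X' (-s)) s := fun s hs =>
    ((hX (-s) ⟨le_neg.mp hs.2, neg_le.mp hs.1⟩).comp s (hasDerivAt_neg s)).neg.congr_deriv
      (by ring)
  have key := image_le_of_deriv_right_lt_deriv_boundary' (f := fun s => -X (-s)) (B := fun _ => -x)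
    (fun s hs => (hrev s hs).continuousAt.continuousWithinAt)
    (fun s hs => (hrev s (Ico_subset_Icc_self hs)).hasDerivWithinAt)
    (by simpa using hb) continuousOn_const (fun _ _ => hasDerivWithinAt_const _ _ _)
    (fun s hs hs_eq => hlevel (-s) ⟨lt_neg_of_lt_neg hs.2, neg_le.mp hs.1⟩ (by linarith))
  intro t ht
  simpa using key (x := -t) ⟨neg_le_neg ht.2, neg_le_neg ht.1⟩

theorem hasDerivAt_invFunOn_of_strictAntiOn {G g : ℝ → ℝ} {s : Set ℝ} (hs : IsOpen s)
    (hanti : StrictAntiOn G s) (hsurj : SurjOn G s univ)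
    (hG : ∀ y ∈ s, HasDerivAt G (g y) y) (hg : ∀ y ∈ s, g y ≠ 0) (t : ℝ) :
    HasDerivAt (invFunOn G s) (g (invFunOn G s t))⁻¹ t := by
  set X := invFunOn G s
  have hXs : ∀ t, X t ∈ s := fun t => hsurj.mapsTo_invFunOn (mem_univ t)
  have hGX : ∀ t, G (X t) = t := fun t => hsurj.rightInvOn_invFunOn (mem_univ t)
  have hrange : range X = s := by
    refine (range_subset_iff.mpr hXs).antisymm fun y hy => ⟨G y, ?_⟩
    exact hanti.injOn.leftInvOn_invFunOn hy
  have hX_anti : StrictAnti X := fun t₁ t₂ h => by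
    by_contra! hle
    have := hanti.antitoneOn (hXs t₁) (hXs t₂) hle
    rw [hGX, hGX] at this
    linarith
  have hcont : ContinuousAt X t := by
    have hnegX : StrictMonoOn (-X) univ := fun t₁ _ t₂ _ h => neg_lt_neg (hX_anti h)
    have himage : (-X) '' univ ∈ 𝓝 ((-X) t) := by
      rw [image_univ, show range (-X) = -range X from ?_, hrange]
      · exact hs.neg.mem_nhds (by simpa using hXs t)
      · ext y; simp [neg_eq_iff_eq_neg]
    simpa using (hnegX.continuousAt_of_image_mem_nhds univ_mem himage).neg
  exact (hG (X t) (hXs t)).of_local_left_inverse hcont (hg _ (hXs t)) (Eventually.of_forall hGX)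

theorem inv_mul_le_neg_inv {z w : ℝ} (hz : 0 < z) (hw : w < 0) (hw₁ : -1 ≤ w) :
    (z * w)⁻¹ ≤ -z⁻¹ := by
  have h : z⁻¹ ≤ (-(z * w))⁻¹ := inv_anti₀ (by nlinarith) (by nlinarith)
  rwa [inv_neg, le_neg] at h

/-- The time the running coupling started at `x` needs to reach `y`; `L_∞(x)` is its limit as
`y → ∞`. -/
noncomputable def hittingTime (γ : ℝ → ℝ) (x y : ℝ) : ℝ := ∫ z in x..y, (z * γ z)⁻¹

theorem hittingTime_self (γ : ℝ → ℝ) (x : ℝ) : hittingTime γ x x = 0 :=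
  intervalIntegral.integral_same

section hittingTime

variable {γ : ℝ → ℝ}

theorem continuousOn_inv_id_mul (hγ : ContinuousOn γ (Ioi 0)) (hneg : ∀ z > 0, γ z < 0) :
    ContinuousOn (fun z => (z * γ z)⁻¹) (Ioi 0) :=
  (continuousOn_id.mul hγ).inv₀ fun z hz => (mul_neg_of_pos_of_neg hz (hneg z hz)).ne

theorem intervalIntegrable_inv_id_mul (hγ : ContinuousOn γ (Ioi 0)) (hneg : ∀ z > 0, γ z < 0)
    {a b : ℝ} (ha : 0 < a) (hb : 0 < b) :
    IntervalIntegrable (fun z => (z * γ z)⁻¹) volume a b :=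
  ((continuousOn_inv_id_mul hγ hneg).mono
    (ordConnected_Ioi.uIcc_subset ha hb)).intervalIntegrable

theorem hasDerivAt_hittingTime (hγ : ContinuousOn γ (Ioi 0)) (hneg : ∀ z > 0, γ z < 0)
    {x y : ℝ} (hx : 0 < x) (hy : 0 < y) :
    HasDerivAt (hittingTime γ x) (y * γ y)⁻¹ y :=
  intervalIntegral.integral_hasDerivAt_right (intervalIntegrable_inv_id_mul hγ hneg hx hy)
    ((continuousOn_inv_id_mul hγ hneg).stronglyMeasurableAtFilter isOpen_Ioi y hy)
    ((continuousOn_inv_id_mul hγ hneg).continuousAt (isOpen_Ioi.mem_nhds hy))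

theorem continuousOn_hittingTime (hγ : ContinuousOn γ (Ioi 0)) (hneg : ∀ z > 0, γ z < 0)
    {x : ℝ} (hx : 0 < x) : ContinuousOn (hittingTime γ x) (Ioi 0) := fun _ hy =>
  (hasDerivAt_hittingTime hγ hneg hx hy).continuousAt.continuousWithinAt

theorem strictAntiOn_hittingTime (hγ : ContinuousOn γ (Ioi 0)) (hneg : ∀ z > 0, γ z < 0)
    {x : ℝ} (hx : 0 < x) : StrictAntiOn (hittingTime γ x) (Ioi 0) := by
  refine strictAntiOn_of_deriv_neg (convex_Ioi 0) (continuousOn_hittingTime hγ hneg hx) ?_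
  intro y hy
  rw [interior_Ioi] at hy
  rw [(hasDerivAt_hittingTime hγ hneg hx hy).deriv]
  exact inv_lt_zero.mpr (mul_neg_of_pos_of_neg hy (hneg y hy))

theorem hittingTime_sub_eq_of_hasDerivAt (hγ : ContinuousOn γ (Ioi 0))
    (hneg : ∀ z > 0, γ z < 0) {X : ℝ → ℝ} {x a b : ℝ} (hx : 0 < x) (hab : a ≤ b)
    (hX : ∀ t ∈ Icc a b, HasDerivAt X (X t * γ (X t)) t) (hpos : ∀ t ∈ Icc a b, 0 < X t) :
    hittingTime γ x (X b) - b = hittingTime γ x (X a) - a := by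
  have hderiv : ∀ t ∈ Icc a b, HasDerivAt (fun t => hittingTime γ x (X t) - t) 0 t := by
    intro t ht
    have hne : X t * γ (X t) ≠ 0 := (mul_neg_of_pos_of_neg (hpos t ht) (hneg _ (hpos t ht))).ne
    exact (((hasDerivAt_hittingTime hγ hneg hx (hpos t ht)).comp t (hX t ht)).sub
      (hasDerivAt_id t)).congr_deriv (by rw [inv_mul_cancel₀ hne, sub_self])
  exact constant_of_has_deriv_right_zero
    (fun t ht => (hderiv t ht).continuousAt.continuousWithinAt)
    (fun t ht => (hderiv t (Ico_subset_Icc_self ht)).hasDerivWithinAt) b ⟨hab, le_rfl⟩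

theorem not_integrableOn_Ioi_inv_id_mul (hneg : ∀ z > 0, γ z < 0)
    (hγ₁ : ∀ z > 0, -1 ≤ γ z) {x : ℝ} (hx : 0 < x) :
    ¬ IntegrableOn (fun z => (z * γ z)⁻¹) (Ioi x) := by
  refine fun h => not_integrableOn_Ioi_inv (h.norm.mono' measurable_inv.aestronglyMeasurable ?_)
  filter_upwards [self_mem_ae_restrict measurableSet_Ioi] with z hz
  have hz₀ : 0 < z := hx.trans hz
  rw [Real.norm_eq_abs, Real.norm_eq_abs, abs_of_pos (inv_pos.mpr hz₀),
    abs_of_neg (inv_lt_zero.mpr (mul_neg_of_pos_of_neg hz₀ (hneg z hz₀)))]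
  linarith [inv_mul_le_neg_inv hz₀ (hneg z hz₀) (hγ₁ z hz₀)]

theorem hittingTime_le_log_sub_log (hγ : ContinuousOn γ (Ioi 0)) (hneg : ∀ z > 0, γ z < 0)
    (hγ₁ : ∀ z > 0, -1 ≤ γ z) {a b : ℝ} (ha : 0 < a) (hab : a ≤ b) :
    hittingTime γ a b ≤ Real.log a - Real.log b := by
  have hb := ha.trans_le hab
  have hsub : uIcc a b ⊆ Ioi 0 := ordConnected_Ioi.uIcc_subset ha hb
  have hinv : IntervalIntegrable (fun z : ℝ => -z⁻¹) volume a b :=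
    (intervalIntegral.intervalIntegrable_inv (fun z hz => (hsub hz).ne') continuousOn_id).neg
  calc hittingTime γ a b ≤ ∫ z in a..b, -z⁻¹ :=
        intervalIntegral.integral_mono_on hab (intervalIntegrable_inv_id_mul hγ hneg ha hb) hinv
          fun z hz => have hz₀ := ha.trans_le hz.1
            inv_mul_le_neg_inv hz₀ (hneg z hz₀) (hγ₁ z hz₀)
    _ = Real.log a - Real.log b := by
        rw [intervalIntegral.integral_neg, integral_inv_of_pos ha hb, Real.log_div hb.ne' ha.ne']
        ring

theorem log_sub_log_mem_uIcc_hittingTime (hγ : ContinuousOn γ (Ioi 0))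
    (hneg : ∀ z > 0, γ z < 0) (hγ₁ : ∀ z > 0, -1 ≤ γ z) {x y : ℝ} (hx : 0 < x) (hy : 0 < y) :
    Real.log x - Real.log y ∈ uIcc 0 (hittingTime γ x y) := by
  rcases le_total x y with hxy | hyx
  · have hG := hittingTime_le_log_sub_log hγ hneg hγ₁ hx hxy
    have hlog := Real.log_le_log hx hxy
    exact mem_uIcc.mpr (Or.inr ⟨by linarith, by linarith⟩)
  · have hG := hittingTime_le_log_sub_log hγ hneg hγ₁ hy hyx
    have hlog := Real.log_le_log hy hyx
    have hsymm : hittingTime γ x y = -hittingTime γ y x := intervalIntegral.integral_symm _ _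
    rw [hsymm]
    exact mem_uIcc.mpr (Or.inl ⟨by linarith, by linarith⟩)

theorem surjOn_hittingTime (hγ : ContinuousOn γ (Ioi 0)) (hneg : ∀ z > 0, γ z < 0)
    (hγ₁ : ∀ z > 0, -1 ≤ γ z) {x : ℝ} (hx : 0 < x) :
    SurjOn (hittingTime γ x) (Ioi 0) univ := by
  intro t _
  have hy : 0 < x * Real.exp (-t) := by positivity
  have hmem := log_sub_log_mem_uIcc_hittingTime hγ hneg hγ₁ hx hy
  rw [Real.log_mul hx.ne' (Real.exp_pos _).ne', Real.log_exp, ← hittingTime_self γ x] at hmem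
  have hsub : uIcc x (x * Real.exp (-t)) ⊆ Ioi 0 := ordConnected_Ioi.uIcc_subset hx hy
  obtain ⟨y, hy, rfl⟩ := intermediate_value_uIcc
    ((continuousOn_hittingTime hγ hneg hx).mono hsub) (by simpa using hmem)
  exact ⟨y, hsub hy, rfl⟩

theorem exists_forall_hasDerivAt_of_neg_one_le (hγ : ContinuousOn γ (Ioi 0))
    (hneg : ∀ z > 0, γ z < 0) (hγ₁ : ∀ z > 0, -1 ≤ γ z) {x : ℝ} (hx : 0 < x) :
    ∃ X : ℝ → ℝ, X 0 = x ∧ ∀ t, HasDerivAt X (X t * γ (X t)) t := by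
  have hanti := strictAntiOn_hittingTime hγ hneg hx
  have hsurj := surjOn_hittingTime hγ hneg hγ₁ hx
  refine ⟨invFunOn (hittingTime γ x) (Ioi 0), ?_, fun t => ?_⟩
  · simpa [hittingTime_self] using hanti.injOn.leftInvOn_invFunOn (mem_Ioi.mpr hx)
  · simpa using hasDerivAt_invFunOn_of_strictAntiOn isOpen_Ioi hanti hsurj
      (fun y hy => hasDerivAt_hittingTime hγ hneg hx hy)
      (fun y hy => inv_ne_zero (mul_neg_of_pos_of_neg hy (hneg y hy)).ne) t

theorem integrableOn_Ioi_inv_id_mul_of_le_neg_mul (hγ : ContinuousOn γ (Ioi 0))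
    (hneg : ∀ z > 0, γ z < 0) {c M : ℝ} (hc : 0 < c) (hdecay : ∀ z ≥ M, γ z ≤ -c * z)
    {x : ℝ} (hx : 0 < x) : IntegrableOn (fun z => (z * γ z)⁻¹) (Ioi x) := by
  have hloc : LocallyIntegrableOn (fun z => (z * γ z)⁻¹) (Ici x) :=
    ((continuousOn_inv_id_mul hγ hneg).mono fun z hz => hx.trans_le hz).locallyIntegrableOn
      measurableSet_Ici
  have hbigO : (fun z => (z * γ z)⁻¹) =O[atTop] fun z => z ^ (-2 : ℝ) := by
    refine Asymptotics.isBigO_iff.mpr ⟨c⁻¹, ?_⟩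
    filter_upwards [eventually_ge_atTop M, eventually_gt_atTop 0] with z hzM hz
    have hcz : c * z * z ≤ z * -γ z := by nlinarith [hdecay z hzM]
    rw [Real.norm_eq_abs, Real.norm_eq_abs, abs_inv,
      abs_of_neg (mul_neg_of_pos_of_neg hz (hneg z hz)), abs_of_pos (by positivity),
      Real.rpow_neg hz.le, Real.rpow_two, ← mul_inv, neg_mul_eq_mul_neg]
    exact inv_anti₀ (by positivity) (by nlinarith)
  exact (hloc.integrableOn_of_isBigO_atTop hbigO
    (integrableAtFilter_rpow_atTop_iff.mpr (by norm_num))).mono_set Ioi_subset_Ici_self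

theorem integral_Ioi_lt_hittingTime (hγ : ContinuousOn γ (Ioi 0)) (hneg : ∀ z > 0, γ z < 0)
    {x y : ℝ} (hx : 0 < x) (hy : 0 < y) (hint : IntegrableOn (fun z => (z * γ z)⁻¹) (Ioi x)) :
    ∫ z in Ioi x, (z * γ z)⁻¹ < hittingTime γ x y := by
  have hanti := strictAntiOn_hittingTime hγ hneg hx
  have hy₁ : y + 1 ∈ Ioi (0 : ℝ) := by simp only [mem_Ioi]; linarith
  have hle : ∫ z in Ioi x, (z * γ z)⁻¹ ≤ hittingTime γ x (y + 1) :=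
    le_of_tendsto (intervalIntegral_tendsto_integral_Ioi x hint tendsto_id) <|
      (eventually_ge_atTop (y + 1)).mono fun z hz =>
        hanti.antitoneOn hy₁ (mem_Ioi.mpr (hy₁.out.trans_le hz)) hz
  exact hle.trans_lt (hanti hy hy₁ (by linarith))

theorem tendsto_atTop_nhdsGT_integral_Ioi (hγ : ContinuousOn γ (Ioi 0)) (hneg : ∀ z > 0, γ z < 0)
    {x : ℝ} (hx : 0 < x) (hint : IntegrableOn (fun z => (z * γ z)⁻¹) (Ioi x))
    {X : ℝ → ℝ} (hX₀ : X 0 = x)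
    (hX : ∀ t ∈ Ioi (∫ z in Ioi x, (z * γ z)⁻¹), HasDerivAt X (X t * γ (X t)) t) :
    Tendsto X (𝓝[>] (∫ z in Ioi x, (z * γ z)⁻¹)) atTop := by
  set L := ∫ z in Ioi x, (z * γ z)⁻¹
  have hanti := strictAntiOn_hittingTime hγ hneg hx
  have hXIcc : ∀ t ∈ Ioi L, ∀ s ∈ Icc t 0, HasDerivAt X (X s * γ (X s)) s :=
    fun t ht s hs => hX s (ht.out.trans_le hs.1)
  have hge : ∀ t ∈ Ioi L, t ≤ 0 → x ≤ X t := fun t ht ht₀ =>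
    le_of_le_right_of_hasDerivAt_neg_at_level (hXIcc t ht) hX₀.ge
      (fun s _ hs => by rw [hs]; exact mul_neg_of_pos_of_neg hx (hneg x hx)) t ⟨le_rfl, ht₀⟩
  have hG : ∀ t ∈ Ioi L, t ≤ 0 → hittingTime γ x (X t) = t := fun t ht ht₀ => by
    have := hittingTime_sub_eq_of_hasDerivAt hγ hneg hx ht₀ (hXIcc t ht)
      fun s hs => hx.trans_le (hge s (ht.out.trans_le hs.1) hs.2)
    rw [hX₀, hittingTime_self] at this
    linarith
  refine tendsto_atTop.mpr fun C => ?_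
  have hC : x ≤ max C x := le_max_right C x
  have hC₀ : max C x ∈ Ioi (0 : ℝ) := hx.trans_le hC
  have hGC : hittingTime γ x (max C x) ≤ 0 :=
    hittingTime_self γ x ▸ hanti.antitoneOn (mem_Ioi.mpr hx) hC₀ hC
  filter_upwards [Ioo_mem_nhdsGT (integral_Ioi_lt_hittingTime hγ hneg hx hC₀ hint)] with t ht
  have ht₀ : t ≤ 0 := ht.2.le.trans hGC
  have hXt : X t ∈ Ioi (0 : ℝ) := hx.trans_le (hge t ht.1 ht₀)
  refine (le_max_left C x).trans ((hanti.lt_iff_gt hXt hC₀).mp ?_).le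
  rw [hG t ht.1 ht₀]
  exact ht.2

end hittingTime

/-- if `−1 < γ₁ < 0` on `(0,∞)` then `∫_x^∞ dz/(z γ₁ z) = −∞`
(non-integrability of the negative integrand) and the running coupling exists
globally; conversely if `γ₁(x₀) ≤ −1` somewhere and `γ₁(x) ≤ −c·x` for large
`x`, then the integral is finite and the running coupling blows up at the
finite backward time `L_∞(x) = ∫_x^∞ dz/(z γ₁ z)`. -/
theorem qcd_running_coupling_dichotomy
    (γ₁ : ℝ → ℝ) (hC1 : ContDiffOn ℝ 1 γ₁ (Ioi 0))
    (hneg : ∀ x > (0 : ℝ), γ₁ x < 0) :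
    ((∀ x > (0 : ℝ), -1 < γ₁ x) →
      (∀ x > (0 : ℝ), ¬ IntegrableOn (fun z => (z * γ₁ z)⁻¹) (Ioi x)) ∧
      (∀ x > (0 : ℝ), ∃ X : ℝ → ℝ, X 0 = x ∧
        ∀ t : ℝ, HasDerivAt X (X t * γ₁ (X t)) t)) ∧
    (∀ x₀ > (0 : ℝ), γ₁ x₀ ≤ -1 →
      (∃ c > (0 : ℝ), ∃ M : ℝ, ∀ x ≥ M, γ₁ x ≤ -c * x) →
      ∀ x > (0 : ℝ),
        IntegrableOn (fun z => (z * γ₁ z)⁻¹) (Ioi x) ∧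
        ∀ X : ℝ → ℝ, X 0 = x →
          (∀ t ∈ Ioi (∫ z in Ioi x, (z * γ₁ z)⁻¹),
            HasDerivAt X (X t * γ₁ (X t)) t) →
          Tendsto X
            (nhdsWithin (∫ z in Ioi x, (z * γ₁ z)⁻¹)
              (Ioi (∫ z in Ioi x, (z * γ₁ z)⁻¹))) atTop) := by
  have hγ := hC1.continuousOn
  refine ⟨fun hone => ?_, fun _ _ _ ⟨c, hc, M, hdecay⟩ x hx => ?_⟩
  · have hγ₁ : ∀ z > 0, -1 ≤ γ₁ z := fun z hz => (hone z hz).le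
    exact ⟨fun x hx => not_integrableOn_Ioi_inv_id_mul hneg hγ₁ hx,
      fun x hx => exists_forall_hasDerivAt_of_neg_one_le hγ hneg hγ₁ hx⟩
  · have hint := integrableOn_Ioi_inv_id_mul_of_le_neg_mul hγ hneg hc hdecay hx
    exact ⟨hint, fun X hX₀ hX => tendsto_atTop_nhdsGT_integral_Ioi hγ hneg hx hint hX₀ hX⟩
end

section
/- Consider the QED-type ODE γ'(x) = (γ(x)+γ(x)²−P(x))/(s·x·γ(x)) with s ≥ 1, P ∈ C²([0,∞)), P > 0 on (0,∞), P(0) = 0, P'(0) ≠ 0, and initial condition γ₁(x₀) = γ₀ > 0, 0 < x₀ < 1. Assume the a priori bound γ₁(x) ≤ C_b·x·|ln x| (s=1) or γ₁(x) ≤ C_b·x^{1/s} (s>1) on [0,x₀]. Then there is a constant C = C(x₀,γ₀) > 0 such that γ₁(x) ≤ C·x for all x ∈ [0,x₀]. -/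
/-!
On the line `γ = α x` the field of the equation has slope `(α x + α²x² - P x) / (s α x²)`, which
exceeds `α` as soon as `2 P x < α x` and `s α x ≤ 1 / 2`. So, followed from right to left, a
solution never crosses that line upwards on `(0, X]`, `X = 1 / (2 s α)`: the triangle
`γ ≤ α x` is invariant. As `P = O(x)` and either a priori bound forces `γ x → 0`, for `α` large
the solution lies in the triangle at `X`; on `[X, x₀]` it is bounded by compactness.
-/

open Set Filter Topology

theorem image_le_of_deriv_boundary_lt_deriv_left {f f' B B' : ℝ → ℝ} {a b : ℝ}
    (hf : ∀ x ∈ Ioc a b, HasDerivAt f (f' x) x) (hB : ∀ x, HasDerivAt B (B' x) x)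
    (hb : f b ≤ B b) (bound : ∀ x ∈ Ioc a b, f x = B x → B' x < f' x) :
    ∀ x ∈ Ioc a b, f x ≤ B x := by
  intro x hx
  have hmem : ∀ u ∈ Icc (-b) (-x), -u ∈ Ioc a b := fun u hu =>
    ⟨hx.1.trans_le (le_neg.2 hu.2), neg_le.2 hu.1⟩
  have hf_neg : ∀ u ∈ Icc (-b) (-x), HasDerivAt (fun v => f (-v)) (-f' (-u)) u := fun u hu =>
    ((hf _ (hmem u hu)).comp u (hasDerivAt_neg u)).congr_deriv (mul_neg_one _)
  have hB_neg : ∀ u, HasDerivAt (fun v => B (-v)) (-B' (-u)) u := fun u =>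
    ((hB _).comp u (hasDerivAt_neg u)).congr_deriv (mul_neg_one _)
  have := image_le_of_deriv_right_lt_deriv_boundary (a := -b) (b := -x)
    (fun u hu => (hf_neg u hu).continuousAt.continuousWithinAt)
    (fun u hu => (hf_neg u (Ico_subset_Icc_self hu)).hasDerivWithinAt) (by simpa using hb) hB_neg
    (fun u hu h => neg_lt_neg (bound _ (hmem u (Ico_subset_Icc_self hu)) h))
    (right_mem_Icc.2 (neg_le_neg hx.2))
  simpa using this

theorem ContDiff.exists_le_mul_of_apply_zero {P : ℝ → ℝ} {n : WithTop ℕ∞} (hP : ContDiff ℝ n P)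
    (hn : n ≠ 0) (hP0 : P 0 = 0) (r : ℝ) : ∃ K : ℝ, ∀ x ∈ Icc 0 r, P x ≤ K * x := by
  obtain ⟨K, hK⟩ := hP.contDiffOn.exists_lipschitzOnWith hn (convex_Icc 0 r) isCompact_Icc
  refine ⟨K, fun x hx => ?_⟩
  have hdist := hK.dist_le_mul x hx 0 (left_mem_Icc.2 (hx.1.trans hx.2))
  rw [Real.dist_eq, Real.dist_eq, hP0, sub_zero, sub_zero, abs_of_nonneg hx.1] at hdist
  exact (le_abs_self _).trans hdist

theorem tendsto_mul_mul_abs_log_nhdsGT_zero (C : ℝ) :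
    Tendsto (fun x => C * x * |Real.log x|) (𝓝[>] 0) (𝓝 0) := by
  have hcont : Tendsto (fun x => C * |x * Real.log x|) (𝓝 0) (𝓝 (C * |0 * Real.log 0|)) :=
    (Real.continuous_mul_log.abs.const_mul C).tendsto 0
  rw [zero_mul, abs_zero, mul_zero] at hcont
  refine (hcont.mono_left nhdsWithin_le_nhds).congr' ?_
  filter_upwards [self_mem_nhdsWithin] with x (hx : 0 < x)
  rw [abs_mul, abs_of_pos hx, mul_assoc]

theorem tendsto_mul_rpow_nhdsGT_zero (C : ℝ) {q : ℝ} (hq : 0 < q) :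
    Tendsto (fun x => C * x ^ q) (𝓝[>] 0) (𝓝 0) := by
  have hcont : Tendsto (fun x : ℝ => C * x ^ q) (𝓝 0) (𝓝 (C * (0 : ℝ) ^ q)) :=
    ((Real.continuousAt_rpow_const 0 q (Or.inr hq.le)).const_mul C).tendsto
  rw [Real.zero_rpow hq.ne', mul_zero] at hcont
  exact hcont.mono_left nhdsWithin_le_nhds

theorem lt_qed_slope_of_touch {s α t p : ℝ} (hs : 0 < s) (hα : 0 < α) (ht : 0 < t)
    (hsαt : s * α * t ≤ 1 / 2) (hp : 2 * p < α * t) :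
    α < (α * t + (α * t) ^ 2 - p) / (s * t * (α * t)) := by
  rw [lt_div_iff₀ (by positivity)]
  nlinarith [mul_le_mul_of_nonneg_right hsαt (by positivity : 0 ≤ α * t), sq_nonneg (α * t)]

theorem qed_ode_le_mul_on_Ioc {s α K X : ℝ} {P γ : ℝ → ℝ} (hs : 0 < s) (hα : 0 < α)
    (hαK : 2 * K < α) (hsαX : s * α * X ≤ 1 / 2) (hP : ∀ x ∈ Ioc 0 X, P x ≤ K * x)
    (hode : ∀ x ∈ Ioc 0 X, HasDerivAt γ ((γ x + γ x ^ 2 - P x) / (s * x * γ x)) x)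
    (hX : γ X ≤ α * X) : ∀ x ∈ Ioc 0 X, γ x ≤ α * x := by
  refine image_le_of_deriv_boundary_lt_deriv_left hode
    (fun x => by simpa using (hasDerivAt_id x).const_mul α) hX fun x hx hγx => ?_
  rw [hγx]
  refine lt_qed_slope_of_touch hs hα hx.1 ?_ ?_
  · calc s * α * x ≤ s * α * X := by gcongr; exact hx.2
      _ ≤ 1 / 2 := hsαX
  · nlinarith [hP x hx, hx.1]

theorem exists_le_mul_on_Ioc_of_le_mul_near_zero {γ : ℝ → ℝ} {α X x₀ : ℝ} (hX : 0 < X)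
    (hα : 0 < α) (hcont : ContinuousOn γ (Icc X x₀)) (hnear : ∀ x ∈ Ioc 0 X, γ x ≤ α * x) :
    ∃ C > 0, ∀ x ∈ Ioc 0 x₀, γ x ≤ C * x := by
  obtain ⟨M, hM⟩ := isCompact_Icc.bddAbove_image hcont
  refine ⟨max α (max M 0 / X), lt_max_of_lt_left hα, fun x hx => ?_⟩
  rcases le_or_gt x X with hxX | hXx
  · exact (hnear x ⟨hx.1, hxX⟩).trans (mul_le_mul_of_nonneg_right (le_max_left _ _) hx.1.le)
  · calc γ x ≤ max M 0 := (hM (mem_image_of_mem γ ⟨hXx.le, hx.2⟩)).trans (le_max_left _ _)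
      _ ≤ max M 0 / X * x := by
        rw [div_mul_eq_mul_div, le_div_iff₀ hX]
        exact mul_le_mul_of_nonneg_left hXx.le (le_max_right _ _)
      _ ≤ max α (max M 0 / X) * x := mul_le_mul_of_nonneg_right (le_max_right _ _) hx.1.le

theorem qed_linear_bound_general
    (s : ℝ) (hs : 1 ≤ s)
    (P : ℝ → ℝ) (hP : ContDiff ℝ 2 P)
    (hP0 : P 0 = 0)
    (x₀ : ℝ) (hx₀ : 0 < x₀)
    (γ : ℝ → ℝ)
    (hode : ∀ x ∈ Ioc (0 : ℝ) x₀,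
      HasDerivAt γ ((γ x + γ x ^ 2 - P x) / (s * x * γ x)) x)
    (hapriori : ∃ Cb > (0 : ℝ),
      (s = 1 → ∀ x ∈ Ioc (0 : ℝ) x₀, γ x ≤ Cb * x * |Real.log x|) ∧
      (1 < s → ∀ x ∈ Ioc (0 : ℝ) x₀, γ x ≤ Cb * x ^ (1 / s))) :
    ∃ C > (0 : ℝ), ∀ x ∈ Ioc (0 : ℝ) x₀, γ x ≤ C * x := by
  have hs0 : 0 < s := one_pos.trans_le hs
  obtain ⟨Cb, -, hlog, hrpow⟩ := hapriori
  obtain ⟨b, hb, hγb⟩ : ∃ b : ℝ → ℝ, Tendsto b (𝓝[>] 0) (𝓝 0) ∧ ∀ x ∈ Ioc 0 x₀, γ x ≤ b x := by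
    rcases hs.eq_or_lt with rfl | hs1
    · exact ⟨_, tendsto_mul_mul_abs_log_nhdsGT_zero Cb, hlog rfl⟩
    · exact ⟨_, tendsto_mul_rpow_nhdsGT_zero Cb (by positivity), hrpow hs1⟩
  have hsmall : ∀ᶠ x in 𝓝[>] 0, γ x < 1 / (2 * s) := by
    have hε : (0 : ℝ) < 1 / (2 * s) := by positivity
    filter_upwards [Ioc_mem_nhdsGT hx₀, hb.eventually (gt_mem_nhds hε)]
      with x hx hbx using (hγb x hx).trans_lt hbx
  obtain ⟨K, hK⟩ := hP.exists_le_mul_of_apply_zero two_ne_zero hP0 x₀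
  have hXlim : Tendsto (fun α => (2 * s * α)⁻¹) atTop (𝓝[>] 0) :=
    tendsto_inv_atTop_nhdsGT_zero.comp (tendsto_id.const_mul_atTop (by positivity))
  obtain ⟨α, hαK, hα, hX, hγX⟩ := ((eventually_gt_atTop (2 * K)).and ((eventually_gt_atTop 0).and
    ((hXlim.eventually (Ioc_mem_nhdsGT hx₀)).and (hXlim.eventually hsmall)))).exists
  have hαX : α * (2 * s * α)⁻¹ = 1 / (2 * s) := by field_simp
  have htriangle := qed_ode_le_mul_on_Ioc hs0 hα hαK (by rw [mul_assoc, hαX]; field_simp; norm_num)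
    (fun x hx => hK x (Ioc_subset_Icc_self (Ioc_subset_Ioc_right hX.2 hx)))
    (fun x hx => hode x (Ioc_subset_Ioc_right hX.2 hx)) (by rw [hαX]; exact hγX.le)
  exact exists_le_mul_on_Ioc_of_le_mul_near_zero hX.1 hα
    (fun x hx => (hode x ⟨hX.1.trans_le hx.1, hx.2⟩).continuousAt.continuousWithinAt) htriangle

/-- QED: for the ODE `γ' = (γ+γ²−P)/(s·x·γ)` with `s ≥ 1`,
`P ∈ C²`, `P(0)=0`, `P'(0) ≠ 0`, `P > 0` on `(0,∞)`, a positive solution on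
`(0,x₀]` satisfying the a priori bound `γ x ≤ C_b·x·|ln x|` (if `s = 1`) or
`γ x ≤ C_b·x^{1/s}` (if `s > 1`) in fact satisfies a linear bound
`γ x ≤ C·x` on `(0,x₀]`. -/
theorem qed_linear_bound
    (s : ℝ) (hs : 1 ≤ s)
    (P : ℝ → ℝ) (hP : ContDiff ℝ 2 P)
    (hP0 : P 0 = 0) (hP'0 : deriv P 0 ≠ 0)
    (hPpos : ∀ x > (0 : ℝ), 0 < P x)
    (x₀ γ₀ : ℝ) (hx₀ : 0 < x₀) (hx₀1 : x₀ < 1) (hγ₀ : 0 < γ₀)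
    (γ : ℝ → ℝ)
    (hode : ∀ x ∈ Ioc (0 : ℝ) x₀,
      HasDerivAt γ ((γ x + γ x ^ 2 - P x) / (s * x * γ x)) x)
    (hinit : γ x₀ = γ₀)
    (hpos : ∀ x ∈ Ioc (0 : ℝ) x₀, 0 < γ x)
    (hapriori : ∃ Cb > (0 : ℝ),
      (s = 1 → ∀ x ∈ Ioc (0 : ℝ) x₀, γ x ≤ Cb * x * |Real.log x|) ∧
      (1 < s → ∀ x ∈ Ioc (0 : ℝ) x₀, γ x ≤ Cb * x ^ (1 / s))) :
    ∃ C > (0 : ℝ), ∀ x ∈ Ioc (0 : ℝ) x₀, γ x ≤ C * x :=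
  qed_linear_bound_general s hs P hP hP0 x₀ hx₀ γ hode hapriori
end

section
/- In the QED setting (ODE γ' = (γ+γ²−P)/(sxγ), P > 0, P(0)=0, P'(0)≠0), if γ₁ and γ₂ are two positive solutions on (0,x₀] with γᵢ(x) ≤ c·x, then |γ₁(x) − γ₂(x)| ≤ |γ₁(x₀) − γ₂(x₀)|·(x/x₀)^{1/s}·exp(C(1/x₀ − 1/x)) for all x ∈ (0,x₀] and some constant C > 0; in particular any two solutions differ by a quantity that vanishes faster than any power of x as x → 0⁺. -/
/-!
Subtracting the two equations, `u = γ₁ - γ₂` solves the linear equation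
`u' = u · (1 + P / (γ₁ γ₂)) / (s x)`. As `P x ≥ m x` on `(0, x₀]` and `γ₁ γ₂ ≤ c² x²`, the rate
is at least `1 / (s x) + C / x²` with `C = m / (s c²)`, the derivative of
`B x = log x / s - C / x`. Hence `u² e^{-2B}` is nondecreasing, which is the bound, and the
factor `e^{-C/x}` kills every power of `x`.
-/

open Set Filter Real Topology

theorem exists_pos_mul_le_of_deriv_ne_zero {P : ℝ → ℝ} (hP : Differentiable ℝ P)
    (hP0 : P 0 = 0) (hP'0 : deriv P 0 ≠ 0) (hPpos : ∀ x > 0, 0 < P x) {x₀ : ℝ}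
    (hx₀ : 0 ≤ x₀) : ∃ m > 0, ∀ x ∈ Ioc 0 x₀, m * x ≤ P x := by
  -- `dslope P 0` is the continuous extension of `x ↦ P x / x` to `0`
  set g := dslope P 0
  have hg : Continuous g := continuousOn_univ.1
    ((continuousOn_dslope univ_mem).2 ⟨hP.continuous.continuousOn, hP 0⟩)
  have hg_eq : ∀ x > 0, g x = P x / x := fun x hx => by
    simp [g, dslope_of_ne _ hx.ne', slope_def_field, hP0]
  have hg_pos : ∀ x ∈ Icc 0 x₀, 0 < g x := by
    rintro x ⟨hx0, -⟩
    rcases hx0.eq_or_lt with rfl | hx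
    · have hle : 0 ≤ g 0 :=
        ge_of_tendsto ((hg.tendsto 0).mono_left (nhdsWithin_le_nhds (s := Ioi 0)))
          (eventually_nhdsWithin_of_forall fun y (hy : 0 < y) => by
            rw [hg_eq y hy]; exact (div_pos (hPpos y hy) hy).le)
      exact hle.lt_of_ne' (by simpa [g, dslope_same] using hP'0)
    · rw [hg_eq x hx]; exact div_pos (hPpos x hx) hx
  obtain ⟨y₀, hy₀, hmin⟩ :=
    isCompact_Icc.exists_isMinOn ⟨0, left_mem_Icc.2 hx₀⟩ hg.continuousOn
  refine ⟨g y₀, hg_pos y₀ hy₀, fun x hx => ?_⟩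
  rw [← le_div_iff₀ hx.1, ← hg_eq x hx.1]
  exact hmin ⟨hx.1.le, hx.2⟩

theorem abs_le_abs_mul_exp_sub_of_hasDerivAt {u a B b : ℝ → ℝ} {x x₀ : ℝ} (hx : x ≤ x₀)
    (hu : ∀ y ∈ Icc x x₀, HasDerivAt u (u y * a y) y)
    (hB : ∀ y ∈ Icc x x₀, HasDerivAt B (b y) y) (hba : ∀ y ∈ Icc x x₀, b y ≤ a y) :
    |u x| ≤ |u x₀| * exp (B x - B x₀) := by
  set v := fun y => u y ^ 2 * exp (-(2 * B y))
  have hv : ∀ y ∈ Icc x x₀, HasDerivAt v (2 * u y ^ 2 * exp (-(2 * B y)) * (a y - b y)) y :=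
    fun y hy => (((hu y hy).fun_pow 2).fun_mul ((hB y hy).const_mul 2).fun_neg.exp).congr_deriv
      (by ring)
  have hmono : v x ≤ v x₀ :=
    monotoneOn_of_hasDerivWithinAt_nonneg (convex_Icc x x₀)
      (fun y hy => (hv y hy).continuousAt.continuousWithinAt)
      (fun y hy => (hv y (interior_subset hy)).hasDerivWithinAt)
      (fun y hy => mul_nonneg (by positivity) (sub_nonneg.2 (hba y (interior_subset hy))))
      (left_mem_Icc.2 hx) (right_mem_Icc.2 hx) hx
  have hv₀ : (u x₀ * exp (B x - B x₀)) ^ 2 * exp (-(2 * B x)) = v x₀ := by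
    simp only [v, mul_pow, ← exp_nat_mul, mul_assoc, ← exp_add]
    congr 3
    push_cast
    ring
  have hsq : u x ^ 2 ≤ (u x₀ * exp (B x - B x₀)) ^ 2 :=
    le_of_mul_le_mul_right (hv₀ ▸ hmono) (exp_pos _)
  simpa [abs_mul] using sq_le_sq.1 hsq

theorem ode_rhs_sub {s x p g₁ g₂ : ℝ} (h₁ : g₁ ≠ 0) (h₂ : g₂ ≠ 0) :
    (g₁ + g₁ ^ 2 - p) / (s * x * g₁) - (g₂ + g₂ ^ 2 - p) / (s * x * g₂) =
      (g₁ - g₂) * ((1 + p / (g₁ * g₂)) / (s * x)) := by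
  rcases eq_or_ne (s * x) 0 with h | h
  · simp [h]
  · field_simp
    ring

theorem hasDerivAt_log_div_sub_div {s C x : ℝ} (hx : x ≠ 0) :
    HasDerivAt (fun y => log y / s - C / y) (1 / (s * x) + C / x ^ 2) x := by
  have := ((hasDerivAt_log hx).div_const s).sub ((hasDerivAt_inv hx).const_mul C)
  simp only [← div_eq_mul_inv] at this
  exact this.congr_deriv (by ring)

theorem exp_log_div_sub_div_sub {s C x x₀ : ℝ} (hx : 0 < x) (hx₀ : 0 < x₀) :
    exp ((log x / s - C / x) - (log x₀ / s - C / x₀)) =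
      (x / x₀) ^ (1 / s) * exp (C * (1 / x₀ - 1 / x)) := by
  rw [rpow_def_of_pos (div_pos hx hx₀), log_div hx.ne' hx₀.ne', ← exp_add]
  congr 1
  ring

theorem one_div_add_div_sq_le {s c m p x g₁ g₂ : ℝ} (hs : 0 < s) (hx : 0 < x)
    (hg₁ : 0 < g₁) (hg₂ : 0 < g₂) (hg₁c : g₁ ≤ c * x) (hg₂c : g₂ ≤ c * x) (hp : 0 ≤ p)
    (hm : m * x ≤ p) :
    1 / (s * x) + m / (s * c ^ 2) / x ^ 2 ≤ (1 + p / (g₁ * g₂)) / (s * x) := by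
  have hc : 0 < c := pos_of_mul_pos_left (hg₁.trans_le hg₁c) hx.le
  have hgg : g₁ * g₂ ≤ (c * x) ^ 2 := by
    rw [sq]; exact mul_le_mul hg₁c hg₂c hg₂.le (by positivity)
  have hmp : m / (c ^ 2 * x) ≤ p / (g₁ * g₂) := by
    calc m / (c ^ 2 * x) = m * x / (c * x) ^ 2 := by field_simp
      _ ≤ p / (c * x) ^ 2 := by gcongr
      _ ≤ p / (g₁ * g₂) := by gcongr
  calc 1 / (s * x) + m / (s * c ^ 2) / x ^ 2 = (1 + m / (c ^ 2 * x)) / (s * x) := by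
        field_simp
    _ ≤ (1 + p / (g₁ * g₂)) / (s * x) := by gcongr

theorem tendsto_div_pow_nhdsGT_zero_of_abs_le {f : ℝ → ℝ} {K C : ℝ} (hC : 0 < C)
    (hf : ∀ᶠ x in 𝓝[>] 0, |f x| ≤ K / exp (C / x)) (n : ℕ) :
    Tendsto (fun x => f x / x ^ n) (𝓝[>] 0) (𝓝 0) := by
  have hlim : Tendsto (fun x : ℝ => x⁻¹ ^ n / exp (C * x⁻¹)) (𝓝[>] 0) (𝓝 0) :=
    ((isLittleO_pow_exp_pos_mul_atTop n hC).comp_tendsto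
      tendsto_inv_nhdsGT_zero).tendsto_div_nhds_zero
  refine squeeze_zero_norm' ?_ (mul_zero K ▸ hlim.const_mul K)
  filter_upwards [hf, self_mem_nhdsWithin] with x hfx (hx : 0 < x)
  rw [norm_div, norm_pow, norm_of_nonneg hx.le, div_le_iff₀ (by positivity)]
  calc ‖f x‖ ≤ K / exp (C / x) := hfx
    _ = K * (x⁻¹ ^ n / exp (C * x⁻¹)) * x ^ n := by
      rw [div_eq_mul_inv C, inv_pow]; field_simp

/-- QED: two positive solutions of `γ' = (γ+γ²−P)/(sxγ)` on
`(0,x₀]`, each bounded by `c·x`, differ by at most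
`|γ₁(x₀)−γ₂(x₀)|·(x/x₀)^{1/s}·exp(C(1/x₀ − 1/x))`; in particular their
difference vanishes faster than any power of `x` as `x → 0⁺`. -/
theorem qed_flat_difference
    (s : ℝ) (hs : 1 ≤ s)
    (P : ℝ → ℝ) (hP : ContDiff ℝ 2 P)
    (hP0 : P 0 = 0) (hP'0 : deriv P 0 ≠ 0)
    (hPpos : ∀ x > (0 : ℝ), 0 < P x)
    (x₀ : ℝ) (hx₀ : 0 < x₀)
    (γ₁ γ₂ : ℝ → ℝ)
    (hode₁ : ∀ x ∈ Ioc (0 : ℝ) x₀,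
      HasDerivAt γ₁ ((γ₁ x + γ₁ x ^ 2 - P x) / (s * x * γ₁ x)) x)
    (hode₂ : ∀ x ∈ Ioc (0 : ℝ) x₀,
      HasDerivAt γ₂ ((γ₂ x + γ₂ x ^ 2 - P x) / (s * x * γ₂ x)) x)
    (hpos₁ : ∀ x ∈ Ioc (0 : ℝ) x₀, 0 < γ₁ x)
    (hpos₂ : ∀ x ∈ Ioc (0 : ℝ) x₀, 0 < γ₂ x)
    (c : ℝ) (hc : 0 < c)
    (hbd₁ : ∀ x ∈ Ioc (0 : ℝ) x₀, γ₁ x ≤ c * x)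
    (hbd₂ : ∀ x ∈ Ioc (0 : ℝ) x₀, γ₂ x ≤ c * x) :
    (∃ C > (0 : ℝ), ∀ x ∈ Ioc (0 : ℝ) x₀,
      |γ₁ x - γ₂ x| ≤
        |γ₁ x₀ - γ₂ x₀| * (x / x₀) ^ (1 / s) *
          Real.exp (C * (1 / x₀ - 1 / x))) ∧
    ∀ n : ℕ, Filter.Tendsto (fun x => (γ₁ x - γ₂ x) / x ^ n)
      (nhdsWithin 0 (Ioi 0)) (nhds 0) := by
  have hs₀ : 0 < s := one_pos.trans_le hs
  obtain ⟨m, hm, hmP⟩ := exists_pos_mul_le_of_deriv_ne_zero (hP.differentiable (by norm_num))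
    hP0 hP'0 hPpos hx₀.le
  set C := m / (s * c ^ 2)
  have hC : 0 < C := by positivity
  have hbound : ∀ x ∈ Ioc (0 : ℝ) x₀, |γ₁ x - γ₂ x| ≤
      |γ₁ x₀ - γ₂ x₀| * (x / x₀) ^ (1 / s) * exp (C * (1 / x₀ - 1 / x)) := by
    intro x hx
    have hsub : Icc x x₀ ⊆ Ioc 0 x₀ := Icc_subset_Ioc hx.1 le_rfl
    rw [mul_assoc, ← exp_log_div_sub_div_sub hx.1 hx₀]
    refine abs_le_abs_mul_exp_sub_of_hasDerivAt (u := fun y => γ₁ y - γ₂ y) hx.2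
      (fun y hy => ?_) (fun y hy => hasDerivAt_log_div_sub_div (hsub hy).1.ne')
      (fun y hy => one_div_add_div_sq_le hs₀ (hsub hy).1 (hpos₁ y (hsub hy))
        (hpos₂ y (hsub hy)) (hbd₁ y (hsub hy)) (hbd₂ y (hsub hy))
        (hPpos y (hsub hy).1).le (hmP y (hsub hy)))
    rw [← ode_rhs_sub (hpos₁ y (hsub hy)).ne' (hpos₂ y (hsub hy)).ne']
    exact (hode₁ y (hsub hy)).sub (hode₂ y (hsub hy))
  refine ⟨⟨C, hC, hbound⟩, tendsto_div_pow_nhdsGT_zero_of_abs_le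
    (K := |γ₁ x₀ - γ₂ x₀| * exp (C / x₀)) hC ?_⟩
  filter_upwards [Ioc_mem_nhdsGT hx₀] with x hx
  calc |γ₁ x - γ₂ x|
      ≤ |γ₁ x₀ - γ₂ x₀| * (x / x₀) ^ (1 / s) * exp (C * (1 / x₀ - 1 / x)) := hbound x hx
    _ ≤ |γ₁ x₀ - γ₂ x₀| * 1 * exp (C * (1 / x₀ - 1 / x)) := by
      gcongr
      exact rpow_le_one (div_pos hx.1 hx₀).le ((div_le_one hx₀).2 hx.2) (by positivity)
    _ = |γ₁ x₀ - γ₂ x₀| * exp (C / x₀) / exp (C / x) := by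
      rw [mul_one, mul_div_assoc, ← exp_sub]
      ring_nf
end

section
/- In the QED setting, fix an integer p ≥ 2 and let γ_{2,p}(x) = P'(0)x + Σ_{n=2}^p aₙ xⁿ be the truncated formal series solution, chosen so that the remainder R[γ_{2,p}](x) = γ_{2,p}'(x) − (γ_{2,p}+γ_{2,p}²−P)/(sxγ_{2,p}) satisfies |R[γ_{2,p}](x)| ≤ C x^{p−1} near 0. Then every solution γ₁ of the ODE with γ₁(x₀) > 0 satisfies |γ₁(x) − γ_{2,p}(x)| ≤ C_p·x^p for all x ∈ [0, x₀/2]; i.e., all solutions agree with the formal power series to every finite order at x = 0. -/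
/-!
The difference `u = γ₁ - γ_{2,p}` solves the linear equation `u' = A u - R` with
`A = (γ₁ γ_{2,p} + P) / (s x γ₁ γ_{2,p})` and `|R| ≤ C x ^ (p - 1)`. Since `P ≥ c₁ x` while
`γ₁, γ_{2,p} ≤ c x`, the coefficient is strongly repelling: `A ≥ m / x ^ 2`. Going backwards from a
small `x₁`, where `|u x₁| ≤ K x₁ ^ p` just by boundedness of `u`, the barriers `± K x ^ p` can then
never be crossed, because at a contact point `u' - (K x ^ p)' ≥ x ^ (p - 2) (m K - (C + p K) x) > 0`.
-/

open Set

theorem image_le_of_deriv_left_gt_deriv_boundary {f f' B B' : ℝ → ℝ} {a b : ℝ}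
    (hf : ∀ x ∈ Ioc a b, HasDerivAt f (f' x) x) (hB : ∀ x ∈ Ioc a b, HasDerivAt B (B' x) x)
    (hb : f b ≤ B b) (bound : ∀ x ∈ Ioc a b, f x = B x → B' x < f' x) :
    ∀ x ∈ Ioc a b, f x ≤ B x := by
  intro y hy
  have mem : ∀ t ∈ Icc (-b) (-y), -t ∈ Ioc a b := fun t ht =>
    ⟨hy.1.trans_le (le_neg.mpr ht.2), neg_le.mp ht.1⟩
  have reflect : ∀ {g g' : ℝ → ℝ}, (∀ x ∈ Ioc a b, HasDerivAt g (g' x) x) →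
      ∀ t ∈ Icc (-b) (-y), HasDerivAt (fun t => g (-t)) (-g' (-t)) t := fun hg t ht => by
    simpa [Function.comp_def] using (hg (-t) (mem t ht)).comp t (hasDerivAt_neg t)
  simpa using image_le_of_deriv_right_lt_deriv_boundary' (f := fun t => f (-t))
    (B := fun t => B (-t))
    (fun t ht => (reflect hf t ht).continuousAt.continuousWithinAt)
    (fun t ht => (reflect hf t (Ico_subset_Icc_self ht)).hasDerivWithinAt)
    (by simpa using hb)
    (fun t ht => (reflect hB t ht).continuousAt.continuousWithinAt)
    (fun t ht => (reflect hB t (Ico_subset_Icc_self ht)).hasDerivWithinAt)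
    (fun t ht h => neg_lt_neg (bound (-t) (mem t (Ico_subset_Icc_self ht)) h))
    (right_mem_Icc.mpr (neg_le_neg hy.2))

theorem le_mul_pow_of_hasDerivAt_of_le_div_sq {w a r : ℝ → ℝ} {b m C K : ℝ} {p : ℕ}
    (hp : 2 ≤ p) (hK : 0 ≤ K)
    (hw : ∀ x ∈ Ioc 0 b, HasDerivAt w (a x * w x - r x) x)
    (ha : ∀ x ∈ Ioc 0 b, m / x ^ 2 ≤ a x)
    (hr : ∀ x ∈ Ioc 0 b, r x ≤ C * x ^ (p - 1))
    (hgap : ∀ x ∈ Ioc 0 b, (C + p * K) * x < m * K)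
    (hb : w b ≤ K * b ^ p) :
    ∀ x ∈ Ioc 0 b, w x ≤ K * x ^ p := by
  refine image_le_of_deriv_left_gt_deriv_boundary hw
    (fun x _ => (hasDerivAt_pow p x).const_mul K) hb fun x hx hwx => ?_
  obtain ⟨k, rfl⟩ : ∃ k, p = k + 2 := ⟨p - 2, by omega⟩
  have hx0 : 0 < x := hx.1
  have hxk : 0 < x ^ k := by positivity
  have hr' : r x ≤ C * x * x ^ k := by
    simpa [pow_succ, mul_comm, mul_left_comm, mul_assoc] using hr x hx
  have haw : m * K * x ^ k ≤ a x * w x := by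
    rw [hwx]
    calc m * K * x ^ k = m / x ^ 2 * (K * x ^ (k + 2)) := by field_simp; ring
      _ ≤ a x * (K * x ^ (k + 2)) := by gcongr; exact ha x hx
  calc K * (((k + 2 : ℕ) : ℝ) * x ^ (k + 2 - 1))
      = (C + ((k + 2 : ℕ) : ℝ) * K) * x * x ^ k - C * x * x ^ k := by
        rw [show k + 2 - 1 = k + 1 by omega, pow_succ]; ring
    _ < m * K * x ^ k - r x := by nlinarith [hgap x hx]
    _ ≤ a x * w x - r x := by linarith

theorem exists_abs_le_mul_pow_of_hasDerivAt {u a r : ℝ → ℝ} {b m C B : ℝ} {p : ℕ}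
    (hp : 2 ≤ p) (hb : 0 < b) (hm : 0 < m)
    (hu : ∀ x ∈ Ioc 0 b, HasDerivAt u (a x * u x - r x) x)
    (ha : ∀ x ∈ Ioc 0 b, m / x ^ 2 ≤ a x)
    (hr : ∀ x ∈ Ioc 0 b, |r x| ≤ C * x ^ (p - 1))
    (hB : ∀ x ∈ Ioc 0 b, |u x| ≤ B) :
    ∃ K > 0, ∀ x ∈ Ioc 0 b, |u x| ≤ K * x ^ p := by
  set b₁ := min b (m / (p + 2))
  have hb₁ : 0 < b₁ := lt_min hb (by positivity)
  have hb₁_mem : b₁ ∈ Ioc 0 b := ⟨hb₁, min_le_left _ _⟩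
  have hsub : Ioc 0 b₁ ⊆ Ioc 0 b := Ioc_subset_Ioc_right (min_le_left _ _)
  set K := max (max C 1) (B / b₁ ^ p)
  have hK : 0 < K := one_pos.trans_le ((le_max_right _ _).trans (le_max_left _ _))
  have hCK : C ≤ K := (le_max_left _ _).trans (le_max_left _ _)
  have hBK : B ≤ K * b₁ ^ p := (div_le_iff₀ (by positivity)).mp (le_max_right _ _)
  have hgap : ∀ x ∈ Ioc 0 b₁, (C + p * K) * x < m * K := fun x hx => by
    have : (p + 2) * x ≤ m := (le_div_iff₀' (by positivity)).mp (hx.2.trans (min_le_right _ _))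
    nlinarith [hx.1]
  have upper := le_mul_pow_of_hasDerivAt_of_le_div_sq hp hK.le (fun x hx => hu x (hsub hx))
    (fun x hx => ha x (hsub hx)) (fun x hx => (le_abs_self _).trans (hr x (hsub hx))) hgap
    ((le_abs_self _).trans ((hB b₁ hb₁_mem).trans hBK))
  have lower := le_mul_pow_of_hasDerivAt_of_le_div_sq (w := fun x => -u x) (r := fun x => -r x)
    hp hK.le (fun x hx => (hu x (hsub hx)).neg.congr_deriv (by ring))
    (fun x hx => ha x (hsub hx)) (fun x hx => (neg_le_abs _).trans (hr x (hsub hx))) hgap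
    ((neg_le_abs _).trans ((hB b₁ hb₁_mem).trans hBK))
  refine ⟨K, hK, fun x hx => ?_⟩
  rcases le_or_gt x b₁ with hxb₁ | hxb₁
  · exact abs_le.mpr ⟨by linarith [lower x ⟨hx.1, hxb₁⟩], upper x ⟨hx.1, hxb₁⟩⟩
  · calc |u x| ≤ B := hB x hx
      _ ≤ K * b₁ ^ p := hBK
      _ ≤ K * x ^ p := by gcongr

theorem mul_dslope_zero_of_map_zero {𝕜 : Type*} [NontriviallyNormedField 𝕜] {f : 𝕜 → 𝕜}
    (hf0 : f 0 = 0) (x : 𝕜) : x * dslope f 0 x = f x := by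
  simpa [hf0] using sub_smul_dslope f 0 x

theorem continuous_dslope {𝕜 E : Type*} [NontriviallyNormedField 𝕜] [NormedAddCommGroup E]
    [NormedSpace 𝕜 E] {f : 𝕜 → E} {a : 𝕜} (hf : Continuous f) (hd : DifferentiableAt 𝕜 f a) :
    Continuous (dslope f a) :=
  continuousOn_univ.mp ((continuousOn_dslope Filter.univ_mem).mpr ⟨hf.continuousOn, hd⟩)

theorem exists_pos_mul_le_of_pos {f : ℝ → ℝ} {b : ℝ} (hb : 0 < b) (hf : Continuous f)
    (hd : DifferentiableAt ℝ f 0) (hf0 : f 0 = 0) (hd0 : deriv f 0 ≠ 0)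
    (hpos : ∀ x ∈ Ioc 0 b, 0 < f x) :
    ∃ c > 0, ∀ x ∈ Ioc 0 b, c * x ≤ f x := by
  set g := dslope f 0
  have hg : Continuous g := continuous_dslope hf hd
  have hg_pos : ∀ x ∈ Ioc 0 b, 0 < g x := fun x hx =>
    pos_of_mul_pos_right ((mul_dslope_zero_of_map_zero hf0 x).symm ▸ hpos x hx) hx.1.le
  have hg0 : 0 < g 0 := by
    refine lt_of_le_of_ne ?_ (show 0 ≠ dslope f 0 0 by rw [dslope_same]; exact hd0.symm)
    refine ge_of_tendsto (hg.continuousWithinAt (s := Ioi 0) (x := 0)).tendsto ?_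
    filter_upwards [Ioc_mem_nhdsGT hb] with x hx using (hg_pos x hx).le
  obtain ⟨z, hz, hz_min⟩ :=
    isCompact_Icc.exists_isMinOn (nonempty_Icc.mpr hb.le) hg.continuousOn
  have hgz : 0 < g z := by
    rcases hz.1.eq_or_lt with h | h
    · rwa [← h]
    · exact hg_pos z ⟨h, hz.2⟩
  refine ⟨g z, hgz, fun x hx => ?_⟩
  rw [← mul_dslope_zero_of_map_zero hf0 x, mul_comm]
  exact mul_le_mul_of_nonneg_left (hz_min ⟨hx.1.le, hx.2⟩) hx.1.le

theorem exists_pos_le_mul_of_differentiable {f : ℝ → ℝ} (b : ℝ) (hf : Differentiable ℝ f)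
    (hf0 : f 0 = 0) :
    ∃ c > 0, ∀ x ∈ Ioc 0 b, f x ≤ c * x := by
  obtain ⟨M, hM⟩ := (isCompact_Icc (a := 0) (b := b)).bddAbove_image
    (continuous_dslope hf.continuous (hf 0)).continuousOn
  refine ⟨max M 1, by positivity, fun x hx => ?_⟩
  rw [← mul_dslope_zero_of_map_zero hf0 x, mul_comm]
  exact mul_le_mul_of_nonneg_right
    ((hM (mem_image_of_mem _ ⟨hx.1.le, hx.2⟩)).trans (le_max_left _ _)) hx.1.le

theorem riccati_sub_riccati {s x y z Q : ℝ} (hs : s ≠ 0) (hx : x ≠ 0) (hy : y ≠ 0) (hz : z ≠ 0) :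
    (y + y ^ 2 - Q) / (s * x * y) - (z + z ^ 2 - Q) / (s * x * z)
      = (y * z + Q) / (s * x * (y * z)) * (y - z) := by
  field_simp
  ring

theorem div_sq_le_riccati_coeff {s x y z Q c₁ c c₂ : ℝ} (hs : 0 < s) (hx : 0 < x) (hy : 0 < y)
    (hz : 0 < z) (hc₁ : 0 ≤ c₁) (hyc : y ≤ c * x) (hzc : z ≤ c₂ * x) (hQ : c₁ * x ≤ Q) :
    c₁ / (s * c * c₂) / x ^ 2 ≤ (y * z + Q) / (s * x * (y * z)) := by
  have hyz : y * z ≤ c * x * (c₂ * x) := mul_le_mul hyc hzc hz.le (hy.trans_le hyc).le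
  calc c₁ / (s * c * c₂) / x ^ 2 = c₁ * x / (s * x * (c * x * (c₂ * x))) := by
        field_simp
    _ ≤ Q / (s * x * (y * z)) := by gcongr; exact (mul_nonneg hc₁ hx.le).trans hQ
    _ ≤ (y * z + Q) / (s * x * (y * z)) := by gcongr; linarith [mul_pos hy hz]

/-- QED: every solution agrees with the truncated formal power
series solution `γ_{2,p}(x) = P'(0)x + Σ_{n=2}^p aₙxⁿ` (whose remainder
satisfies `|R[γ_{2,p}](x)| ≤ C x^{p−1}`) to order `p`:
`|γ₁ x − γ_{2,p} x| ≤ C_p·x^p` for `x ∈ (0, x₀/2]`. -/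
theorem qed_all_orders_agreement
    (s : ℝ) (hs : 1 ≤ s)
    (P : ℝ → ℝ) (hP : ContDiff ℝ 2 P)
    (hP0 : P 0 = 0) (hP'0 : deriv P 0 ≠ 0)
    (hPpos : ∀ x > (0 : ℝ), 0 < P x)
    (x₀ : ℝ) (hx₀ : 0 < x₀)
    (p : ℕ) (hp : 2 ≤ p) (a : ℕ → ℝ)
    (γ2p : ℝ → ℝ)
    (hγ2p : γ2p = fun x => deriv P 0 * x + ∑ n ∈ Finset.Icc 2 p, a n * x ^ n)
    (hγ2ppos : ∀ x ∈ Ioc (0 : ℝ) x₀, 0 < γ2p x)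
    (hrem : ∃ C > (0 : ℝ), ∀ x ∈ Ioc (0 : ℝ) x₀,
      |deriv γ2p x - (γ2p x + γ2p x ^ 2 - P x) / (s * x * γ2p x)|
        ≤ C * x ^ (p - 1))
    (γ₁ : ℝ → ℝ)
    (hode : ∀ x ∈ Ioc (0 : ℝ) x₀,
      HasDerivAt γ₁ ((γ₁ x + γ₁ x ^ 2 - P x) / (s * x * γ₁ x)) x)
    (hpos : ∀ x ∈ Ioc (0 : ℝ) x₀, 0 < γ₁ x)
    (hlin : ∃ c > (0 : ℝ), ∀ x ∈ Ioc (0 : ℝ) x₀, γ₁ x ≤ c * x) :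
    ∃ Cp > (0 : ℝ), ∀ x ∈ Ioc (0 : ℝ) (x₀ / 2),
      |γ₁ x - γ2p x| ≤ Cp * x ^ p := by
  obtain ⟨c, hc, hγ₁_le⟩ := hlin
  obtain ⟨C, -, hR⟩ := hrem
  have hs₀ : 0 < s := one_pos.trans_le hs
  have hγ2p_diff : Differentiable ℝ γ2p := by subst hγ2p; fun_prop
  have hγ2p_zero : γ2p 0 = 0 := by
    subst hγ2p
    simp only [mul_zero, zero_add]
    exact Finset.sum_eq_zero fun n hn => by
      rw [zero_pow (by linarith [(Finset.mem_Icc.mp hn).1]), mul_zero]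
  obtain ⟨c₁, hc₁, hP_ge⟩ := exists_pos_mul_le_of_pos hx₀ hP.continuous
    (hP.differentiable (by norm_num) 0) hP0 hP'0 fun x hx => hPpos x hx.1
  obtain ⟨c₂, hc₂, hγ2p_le⟩ := exists_pos_le_mul_of_differentiable x₀ hγ2p_diff hγ2p_zero
  have hu : ∀ x ∈ Ioc 0 x₀, HasDerivAt (fun x => γ₁ x - γ2p x)
      ((γ₁ x * γ2p x + P x) / (s * x * (γ₁ x * γ2p x)) * (γ₁ x - γ2p x)
        - (deriv γ2p x - (γ2p x + γ2p x ^ 2 - P x) / (s * x * γ2p x))) x := fun x hx => by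
    refine ((hode x hx).sub (hγ2p_diff x).hasDerivAt).congr_deriv ?_
    rw [← riccati_sub_riccati hs₀.ne' hx.1.ne' (hpos x hx).ne' (hγ2ppos x hx).ne']
    ring
  have hA : ∀ x ∈ Ioc 0 x₀, c₁ / (s * c * c₂) / x ^ 2
      ≤ (γ₁ x * γ2p x + P x) / (s * x * (γ₁ x * γ2p x)) := fun x hx =>
    div_sq_le_riccati_coeff hs₀ hx.1 (hpos x hx) (hγ2ppos x hx) hc₁.le (hγ₁_le x hx)
      (hγ2p_le x hx) (hP_ge x hx)
  have hB : ∀ x ∈ Ioc 0 x₀, |γ₁ x - γ2p x| ≤ (c + c₂) * x₀ := fun x hx => by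
    have : (c + c₂) * x ≤ (c + c₂) * x₀ := by gcongr; exact hx.2
    rw [abs_sub_le_iff]
    constructor <;> linarith [hγ₁_le x hx, hγ2p_le x hx, hpos x hx, hγ2ppos x hx]
  obtain ⟨K, hK, hbound⟩ :=
    exists_abs_le_mul_pow_of_hasDerivAt hp hx₀ (by positivity) hu hA hR hB
  exact ⟨K, hK, fun x hx => hbound x ⟨hx.1, hx.2.trans (by linarith)⟩⟩
end

section
/- Let γ₁ be a solution of γ' = (γ+γ²−P)/(xγ) on (0,x*] with γ₁ < 0, lim_{x→0⁺}γ₁(x) = −1, P(0)=0, P'(0)<0 and P twice differentiable with bounded P'' near 0 (so P(x) = P'(0)x + O(x²)). If γ₁ is bounded between min(−1,γ₁(x₀)) and γ_c⁺(x₀) < 0 on (0,x₀], then γ₁(x) = −1 + O(x·(1+|ln x|)) as x → 0⁺, using the integral representation γ₁(x) = x(1+γ₁(x₀))/x₀ − 1 − x∫_{x₀}^x P(z)/(z²γ₁(z)) dz. -/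
open Set Filter

/-!
The substitution `f x = (γ₁ x + 1) / x` turns the ODE into `f' x = -P x / (x² γ₁ x)`, the
differential form of the integral representation of `γ₁`. Since `|P x| = O(x)` and `γ₁` stays
below `γ_c⁺(x₀) < 0`, this gives `|f' x| ≤ A / x`, so `f` grows at most like `A |log x|` as
`x → 0⁺`; multiplying back by `x` yields the rate.
-/

lemma abs_le_mul_of_abs_sub_mul_le_sq {p a C ε x : ℝ} (hC : 0 ≤ C) (hx : x ∈ Icc 0 ε)
    (hp : |p - a * x| ≤ C * x ^ 2) : |p| ≤ (|a| + C * ε) * x := by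
  have hCx : C * x ^ 2 ≤ C * ε * x := by
    nlinarith [mul_nonneg (mul_nonneg hC hx.1) (sub_nonneg.2 hx.2)]
  have hax : |a * x| = |a| * x := by rw [abs_mul, abs_of_nonneg hx.1]
  linarith [abs_sub_abs_le_abs_sub p (a * x)]

lemma norm_sub_le_mul_log_sub_of_norm_deriv_le {E : Type*} [NormedAddCommGroup E]
    [NormedSpace ℝ E] {f f' : ℝ → E} {A x y : ℝ} (hx : 0 < x) (hxy : x ≤ y)
    (hf : ∀ t ∈ Icc x y, HasDerivAt f (f' t) t) (hbound : ∀ t ∈ Icc x y, ‖f' t‖ ≤ A / t) :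
    ‖f y - f x‖ ≤ A * (Real.log y - Real.log x) := by
  have hlog : ∀ t ∈ Icc x y, HasDerivAt (fun s ↦ A * (Real.log s - Real.log x)) (A / t) t :=
    fun t ht ↦ by
      simpa [div_eq_mul_inv] using
        ((Real.hasDerivAt_log (hx.trans_le ht.1).ne').sub_const (Real.log x)).const_mul A
  refine image_norm_le_of_norm_deriv_right_le_deriv_boundary' (f := fun t ↦ f t - f x)
    (fun t ht ↦ (hf t ht).continuousAt.continuousWithinAt.sub continuousWithinAt_const)
    (fun t ht ↦ ((hf t (Ico_subset_Icc_self ht)).sub_const (f x)).hasDerivWithinAt)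
    (by simp) (fun t ht ↦ (hlog t ht).continuousAt.continuousWithinAt)
    (fun t ht ↦ (hlog t (Ico_subset_Icc_self ht)).hasDerivWithinAt)
    (fun t ht ↦ hbound t (Ico_subset_Icc_self ht)) ⟨hxy, le_rfl⟩

lemma hasDerivAt_add_one_div_of_ode {P γ : ℝ → ℝ} {x : ℝ} (hx : x ≠ 0) (hγ : γ x ≠ 0)
    (hode : HasDerivAt γ ((γ x + γ x ^ 2 - P x) / (x * γ x)) x) :
    HasDerivAt (fun t ↦ (γ t + 1) / t) (-P x / (x ^ 2 * γ x)) x := by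
  refine ((hode.add_const 1).fun_div (hasDerivAt_id' x) hx).congr_deriv ?_
  field_simp
  ring

lemma abs_add_one_le_of_ode {P γ : ℝ → ℝ} {K m δ : ℝ} (hm : 0 < m) (hδ1 : δ ≤ 1)
    (hP : ∀ t ∈ Ioc 0 δ, |P t| ≤ K * t) (hγ : ∀ t ∈ Ioc 0 δ, m ≤ |γ t|)
    (hode : ∀ t ∈ Ioc 0 δ, HasDerivAt γ ((γ t + γ t ^ 2 - P t) / (t * γ t)) t) :
    ∀ x ∈ Ioc 0 δ, |γ x + 1| ≤ (|(γ δ + 1) / δ| + K / m) * x * (1 + |Real.log x|) := by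
  intro x ⟨hx, hxδ⟩
  have hsub : Icc x δ ⊆ Ioc 0 δ := fun t ht ↦ ⟨hx.trans_le ht.1, ht.2⟩
  have hδ : 0 < δ := hx.trans_le hxδ
  have hK : 0 ≤ K := nonneg_of_mul_nonneg_left ((abs_nonneg _).trans (hP δ ⟨hδ, le_rfl⟩)) hδ
  have hderiv_bound : ∀ t ∈ Icc x δ, ‖-P t / (t ^ 2 * γ t)‖ ≤ K / m / t := by
    intro t ht
    have ht0 : 0 < t := (hsub ht).1
    rw [Real.norm_eq_abs, abs_div, abs_neg, abs_mul, abs_of_pos (pow_pos ht0 2),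
      div_le_div_iff₀ (mul_pos (pow_pos ht0 2) (hm.trans_le (hγ t (hsub ht)))) ht0]
    calc |P t| * t ≤ K * t * t := by gcongr; exact hP t (hsub ht)
      _ = K / m * (t ^ 2 * m) := by field_simp
      _ ≤ K / m * (t ^ 2 * |γ t|) := by gcongr; exact hγ t (hsub ht)
  have hf := norm_sub_le_mul_log_sub_of_norm_deriv_le hx hxδ
    (fun t ht ↦ hasDerivAt_add_one_div_of_ode (hsub ht).1.ne'
      (abs_pos.mp (hm.trans_le (hγ t (hsub ht)))) (hode t (hsub ht))) hderiv_bound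
  rw [Real.norm_eq_abs, abs_sub_comm] at hf
  have hlog : Real.log δ - Real.log x ≤ |Real.log x| := by
    rw [abs_of_nonpos (Real.log_nonpos hx.le (hxδ.trans hδ1))]
    linarith [Real.log_nonpos hδ.le hδ1]
  have hKm : 0 ≤ K / m := div_nonneg hK hm.le
  have hfx : |(γ x + 1) / x| ≤ |(γ δ + 1) / δ| + K / m * |Real.log x| := by
    linarith [abs_sub_abs_le_abs_sub ((γ x + 1) / x) ((γ δ + 1) / δ),
      mul_le_mul_of_nonneg_left hlog hKm]
  rw [abs_div, abs_of_pos hx, div_le_iff₀ hx] at hfx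
  calc |γ x + 1| ≤ (|(γ δ + 1) / δ| + K / m * |Real.log x|) * x := hfx
    _ ≤ (|(γ δ + 1) / δ| + K / m) * x * (1 + |Real.log x|) := by
      nlinarith [mul_nonneg (mul_nonneg (abs_nonneg ((γ δ + 1) / δ)) hx.le)
        (abs_nonneg (Real.log x)), mul_nonneg hKm hx.le]

theorem qcd_minus_one_rate_general
    (P : ℝ → ℝ) (x₀ : ℝ)
    (hPquad : ∃ C > (0 : ℝ), ∃ ε > (0 : ℝ), ∀ x ∈ Icc (0 : ℝ) ε,
      |P x - deriv P 0 * x| ≤ C * x ^ 2)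
    (γ₁ : ℝ → ℝ)
    (hode : ∀ x ∈ Ioc (0 : ℝ) x₀,
      HasDerivAt γ₁ ((γ₁ x + γ₁ x ^ 2 - P x) / (x * γ₁ x)) x)
    (hgcneg : (Real.sqrt (1 + 4 * P x₀) - 1) / 2 < 0)
    (hbound : ∀ x ∈ Ioc (0 : ℝ) x₀,
      min (-1) (γ₁ x₀) ≤ γ₁ x ∧ γ₁ x ≤ (Real.sqrt (1 + 4 * P x₀) - 1) / 2) :
    ∃ C > (0 : ℝ), ∃ δ > (0 : ℝ), ∀ x ∈ Ioc (0 : ℝ) (min δ x₀),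
      |γ₁ x - (-1)| ≤ C * x * (1 + |Real.log x|) := by
  obtain ⟨C, hC, ε, hε, hPquad⟩ := hPquad
  set m := -((Real.sqrt (1 + 4 * P x₀) - 1) / 2) with hm_def
  have hm : 0 < m := neg_pos.2 hgcneg
  set δ := min (min ε 1) x₀
  have hδε : δ ≤ ε := (min_le_left _ _).trans (min_le_left _ _)
  have hδx₀ : Ioc 0 δ ⊆ Ioc 0 x₀ := Ioc_subset_Ioc_right (min_le_right _ _)
  refine ⟨|(γ₁ δ + 1) / δ| + (|deriv P 0| + C * ε) / m, by positivity, min ε 1, by positivity,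
    fun x hx ↦ ?_⟩
  rw [sub_neg_eq_add]
  refine abs_add_one_le_of_ode hm ((min_le_left _ _).trans (min_le_right _ _))
    (fun t ht ↦ abs_le_mul_of_abs_sub_mul_le_sq hC.le ⟨ht.1.le, ht.2.trans hδε⟩
      (hPquad t ⟨ht.1.le, ht.2.trans hδε⟩))
    (fun t ht ↦ ?_) (fun t ht ↦ hode t (hδx₀ ht)) x hx
  linarith [(hbound t (hδx₀ ht)).2, neg_le_abs (γ₁ t), hm_def]

/-- a negative solution on `(0,x₀]` tending to `−1` at `0⁺`,
bounded between `min(−1, γ₁(x₀))` and `γ_c⁺(x₀) < 0`, approaches `−1` at the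
rate `γ₁ x = −1 + O(x·(1+|ln x|))` as `x → 0⁺`, given
`P x = P'(0)x + O(x²)` near `0` (P twice differentiable, `P(0)=0`, `P'(0)<0`,
bounded second derivative near 0). -/
theorem qcd_minus_one_rate
    (P : ℝ → ℝ) (xstar x₀ : ℝ) (hx₀ : 0 < x₀) (hx₀star : x₀ ≤ xstar)
    (hP0 : P 0 = 0) (hP'0 : deriv P 0 < 0)
    (hPquad : ∃ C > (0 : ℝ), ∃ ε > (0 : ℝ), ∀ x ∈ Icc (0 : ℝ) ε,
      |P x - deriv P 0 * x| ≤ C * x ^ 2)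
    (γ₁ : ℝ → ℝ)
    (hode : ∀ x ∈ Ioc (0 : ℝ) x₀,
      HasDerivAt γ₁ ((γ₁ x + γ₁ x ^ 2 - P x) / (x * γ₁ x)) x)
    (hneg : ∀ x ∈ Ioc (0 : ℝ) x₀, γ₁ x < 0)
    (hgcneg : (Real.sqrt (1 + 4 * P x₀) - 1) / 2 < 0)
    (hbound : ∀ x ∈ Ioc (0 : ℝ) x₀,
      min (-1) (γ₁ x₀) ≤ γ₁ x ∧ γ₁ x ≤ (Real.sqrt (1 + 4 * P x₀) - 1) / 2)
    (hlim : Tendsto γ₁ (nhdsWithin 0 (Ioi 0)) (nhds (-1))) :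
    ∃ C > (0 : ℝ), ∃ δ > (0 : ℝ), ∀ x ∈ Ioc (0 : ℝ) (min δ x₀),
      |γ₁ x - (-1)| ≤ C * x * (1 + |Real.log x|) :=
  qcd_minus_one_rate_general P x₀ hPquad γ₁ hode hgcneg hbound
end
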